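/- arXiv:2502.19117 — 8 statements merged into one kernel-verified Lean document; each statement's English description precedes it below -/
import Mathlib

section
/- Let q > 0 and let f, g : ℝ → ℝ and w : ℝ → ℝ with w(ξ) ≥ 0 for all ξ ∈ ℝ. Assume there are positive constants L₁, L₂, L₃, L₄ such that ξ·f(ξ) + w(ξ)·g(ξ)² ≤ L₁ − L₂·|ξ|^{q+2} and |f(ξ)| ≤ L₃ + L₄·|ξ|^{q+1} for all ξ ∈ ℝ. Then there exist constants K > 0 and c > 0, depending only on q, L₁, L₂, L₃, L₄, such that for every τ with 0 < τ ≤ min{1, L₂²/(32·L₄⁴)} and every ξ ∈ ℝ one has τ·f_τ(ξ)² + ξ·f_τ(ξ) + w(ξ)·g_τ(ξ)² ≤ K − c·ξ². -/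
open Real

/-- The tamed drift function `f_τ(ξ) = f(ξ)/(1+τ|ξ|^{2q})^{1/2}`. -/
noncomputable def fTam (f : ℝ → ℝ) (q τ ξ : ℝ) : ℝ :=
  f ξ / Real.sqrt (1 + τ * |ξ| ^ (2 * q))

/-- The tamed diffusion function `g_τ(ξ) = g(ξ)/(1+τ^{1/2}|ξ|^{q})^{1/2}`. -/
noncomputable def gTam (g : ℝ → ℝ) (q τ ξ : ℝ) : ℝ :=
  g ξ / Real.sqrt (1 + Real.sqrt τ * |ξ| ^ q)

/-- Young-type inequality: `a² ≤ ε·a^q·a² + (ε^{-1/q})²` for `a ≥ 0`. -/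
lemma young_aux (q : ℝ) (hq : 0 < q) (ε : ℝ) (hε : 0 < ε) (a : ℝ) (ha : 0 ≤ a) :
    a ^ 2 ≤ ε * (a ^ q * a ^ 2) + (ε ^ (-(1 / q))) ^ 2 := by
  set b := ε ^ (-(1 / q)) with hb
  have hb0 : 0 < b := Real.rpow_pos_of_pos hε _
  have haq : 0 ≤ a ^ q := Real.rpow_nonneg ha q
  rcases le_total a b with h | h
  · have h1 : a ^ 2 ≤ b ^ 2 := by nlinarith
    have h2 : 0 ≤ ε * (a ^ q * a ^ 2) := by positivity
    linarith
  · have hbq : b ^ q = ε⁻¹ := by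
      show (ε ^ (-(1 / q))) ^ q = ε⁻¹
      rw [← Real.rpow_mul hε.le, neg_mul, one_div, inv_mul_cancel₀ hq.ne', Real.rpow_neg_one]
    have haq' : ε⁻¹ ≤ a ^ q := hbq ▸ Real.rpow_le_rpow hb0.le h hq.le
    have h1 : 1 ≤ ε * a ^ q := by
      have := mul_le_mul_of_nonneg_left haq' hε.le
      rwa [mul_inv_cancel₀ hε.ne'] at this
    nlinarith [sq_nonneg a, sq_nonneg b]

set_option maxHeartbeats 1000000 in
theorem tamed_coercive_pointwise
    (q : ℝ) (hq : 0 < q) (f g w : ℝ → ℝ) (hw : ∀ ξ : ℝ, 0 ≤ w ξ)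
    (L1 L2 L3 L4 : ℝ) (hL1 : 0 < L1) (hL2 : 0 < L2) (hL3 : 0 < L3) (hL4 : 0 < L4)
    (hcoe : ∀ ξ : ℝ, ξ * f ξ + w ξ * (g ξ) ^ 2 ≤ L1 - L2 * |ξ| ^ (q + 2))
    (hgrow : ∀ ξ : ℝ, |f ξ| ≤ L3 + L4 * |ξ| ^ (q + 1)) :
    ∃ K c : ℝ, 0 < K ∧ 0 < c ∧
      ∀ τ : ℝ, 0 < τ → τ ≤ min 1 (L2 ^ 2 / (32 * L4 ^ 4)) →
        ∀ ξ : ℝ,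
          τ * (fTam f q τ ξ) ^ 2 + ξ * fTam f q τ ξ + w ξ * (gTam g q τ ξ) ^ 2 ≤
            K - c * ξ ^ 2 := by
  set ε : ℝ := L2 / (6 * L4 ^ 2) with hεdef
  have hε : 0 < ε := by positivity
  set b : ℝ := ε ^ (-(1 / q)) with hbdef
  have hb0 : 0 < b := Real.rpow_pos_of_pos hε _
  refine ⟨L1 + 2 * L3 ^ 2 + 3 * L4 ^ 2 * b ^ 2, L4 ^ 2, by positivity, by positivity, ?_⟩
  intro τ hτ hτle ξ
  have hτ1 : τ ≤ 1 := hτle.trans (min_le_left _ _)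
  have hτ2 : τ ≤ L2 ^ 2 / (32 * L4 ^ 4) := hτle.trans (min_le_right _ _)
  simp only [fTam, gTam]
  set a := |ξ| with hadef
  have ha : 0 ≤ a := abs_nonneg ξ
  set A := a ^ q with hAdef
  have hA : 0 ≤ A := Real.rpow_nonneg ha q
  have h2q : a ^ (2 * q) = A ^ 2 := by
    rw [hAdef, mul_comm, Real.rpow_mul ha, ← Real.rpow_natCast (a ^ q) 2]
    norm_num
  have hq1 : a ^ (q + 1) = A * a := by
    rw [Real.rpow_add' ha (by positivity : q + 1 ≠ 0), Real.rpow_one]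
  have hq2 : a ^ (q + 2) = A * a ^ 2 := by
    rw [Real.rpow_add' ha (by positivity : q + 2 ≠ 0), ← Real.rpow_natCast a 2]
    norm_num
    exact Or.inl hAdef.symm
  set D := Real.sqrt (1 + τ * a ^ (2 * q)) with hDdef
  have hden0 : (0:ℝ) ≤ 1 + τ * a ^ (2 * q) := by
    have := Real.rpow_nonneg ha (2 * q)
    nlinarith
  have hDsq : D ^ 2 = 1 + τ * A ^ 2 := by
    rw [hDdef, Real.sq_sqrt hden0, h2q]
  have hD1 : 1 ≤ D := by
    have h0 : (1:ℝ) ≤ 1 + τ * a ^ (2 * q) := by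
      have := Real.rpow_nonneg ha (2 * q)
      nlinarith
    have := Real.sqrt_le_sqrt h0
    rwa [Real.sqrt_one] at this
  have hD0 : 0 < D := lt_of_lt_of_le one_pos hD1
  have hst : Real.sqrt τ ^ 2 = τ := Real.sq_sqrt hτ.le
  have hst0 : 0 ≤ Real.sqrt τ := Real.sqrt_nonneg τ
  have hE0 : (0:ℝ) < 1 + Real.sqrt τ * A := by positivity
  have hgT : (g ξ / Real.sqrt (1 + Real.sqrt τ * A)) ^ 2
      = (g ξ) ^ 2 / (1 + Real.sqrt τ * A) := by
    rw [div_pow, Real.sq_sqrt hE0.le]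
  rw [hgT]
  -- bound on the first (tamed drift square) term
  have hf1 : (f ξ) ^ 2 ≤ (L3 + L4 * (A * a)) ^ 2 := by
    have h := hgrow ξ
    rw [show |ξ| ^ (q + 1) = A * a from hq1] at h
    have := pow_le_pow_left₀ (abs_nonneg (f ξ)) h 2
    rwa [sq_abs] at this
  have hf2 : (f ξ) ^ 2 ≤ 2 * L3 ^ 2 + 2 * L4 ^ 2 * (A ^ 2 * a ^ 2) := by
    nlinarith [sq_nonneg (L3 - L4 * (A * a))]
  have hT1 : τ * (f ξ / D) ^ 2 ≤ 2 * L3 ^ 2 + 2 * L4 ^ 2 * a ^ 2 := by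
    rw [div_pow, hDsq, mul_div_assoc']
    have hden : (0:ℝ) < 1 + τ * A ^ 2 := by positivity
    rw [div_le_iff₀ hden]
    have hf2mul := mul_le_mul_of_nonneg_left hf2 hτ.le
    have p1 : (0:ℝ) ≤ 2 * L3 ^ 2 * (1 - τ) := by nlinarith
    have p2 : (0:ℝ) ≤ 2 * L3 ^ 2 * (τ * A ^ 2) := by positivity
    have p3 : (0:ℝ) ≤ 2 * L4 ^ 2 * a ^ 2 := by positivity
    linarith [hf2mul, p1, p2, p3]
  -- bound on the remaining two terms
  have hDE : D ≤ 1 + Real.sqrt τ * A := by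
    rw [hDdef, h2q, show (1:ℝ) + Real.sqrt τ * A = Real.sqrt ((1 + Real.sqrt τ * A) ^ 2) from
      (Real.sqrt_sq hE0.le).symm]
    apply Real.sqrt_le_sqrt
    nlinarith [mul_nonneg hst0 hA]
  have h23 : ξ * (f ξ / D) + w ξ * ((g ξ) ^ 2 / (1 + Real.sqrt τ * A))
      ≤ L1 - L2 * (A * a ^ 2) / D := by
    have step1 : w ξ * ((g ξ) ^ 2 / (1 + Real.sqrt τ * A)) ≤ w ξ * ((g ξ) ^ 2 / D) :=
      mul_le_mul_of_nonneg_left (div_le_div_of_nonneg_left (sq_nonneg _) hD0 hDE) (hw ξ)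
    have step2 : ξ * (f ξ / D) + w ξ * ((g ξ) ^ 2 / D)
        = (ξ * f ξ + w ξ * (g ξ) ^ 2) / D := by ring
    have step3 : (ξ * f ξ + w ξ * (g ξ) ^ 2) / D ≤ (L1 - L2 * (A * a ^ 2)) / D := by
      apply (div_le_div_iff_of_pos_right hD0).mpr
      have := hcoe ξ
      rwa [show |ξ| ^ (q + 2) = A * a ^ 2 from hq2] at this
    have step4 : (L1 - L2 * (A * a ^ 2)) / D ≤ L1 - L2 * (A * a ^ 2) / D := by
      rw [sub_div]
      have : L1 / D ≤ L1 := div_le_self hL1.le hD1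
      linarith
    linarith
  -- the key coercivity estimate
  have hkey : 3 * L4 ^ 2 * a ^ 2 ≤ L2 * (A * a ^ 2) / D + 3 * L4 ^ 2 * b ^ 2 := by
    rcases le_total (Real.sqrt τ * A) 1 with hsmall | hlarge
    · -- small regime : D ≤ 2
      have h11 : (Real.sqrt τ * A) ^ 2 ≤ 1 := by
        nlinarith [mul_nonneg hst0 hA]
      rw [mul_pow, hst] at h11
      have hD4 : D ^ 2 ≤ 4 := by
        rw [hDsq]; linarith only [h11]
      have hD2 : D ≤ 2 := by
        have h := Real.sqrt_le_sqrt hD4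
        rwa [Real.sqrt_sq hD0.le, show Real.sqrt 4 = 2 by
          rw [show (4:ℝ) = 2 ^ 2 by norm_num, Real.sqrt_sq (by norm_num : (0:ℝ) ≤ 2)]] at h
      have hdiv : L2 * (A * a ^ 2) / 2 ≤ L2 * (A * a ^ 2) / D :=
        div_le_div_of_nonneg_left (by positivity) hD0 hD2
      have hyoung := young_aux q hq ε hε a ha
      rw [← hAdef, ← hbdef] at hyoung
      have h4 := mul_le_mul_of_nonneg_left hyoung (by positivity : (0:ℝ) ≤ 3 * L4 ^ 2)
      have h3 : 3 * L4 ^ 2 * (ε * (A * a ^ 2)) = L2 * (A * a ^ 2) / 2 := by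
        rw [hεdef]; field_simp; ring
      linarith only [h4, h3, hdiv]
    · -- large regime : D ≤ √(2τ)·A
      have hA0 : 0 < A := by
        by_contra hcon
        push_neg at hcon
        have : Real.sqrt τ * A ≤ 0 := mul_nonpos_of_nonneg_of_nonpos hst0 hcon
        linarith only [this, hlarge]
      have hs0 : 0 < Real.sqrt (2 * τ) := Real.sqrt_pos.mpr (by positivity)
      have hDle : D ≤ Real.sqrt (2 * τ) * A := by
        have h12 : (1:ℝ) ≤ (Real.sqrt τ * A) ^ 2 := one_le_pow₀ hlarge
        rw [mul_pow, hst] at h12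
        have h1 : 1 + τ * A ^ 2 ≤ 2 * τ * A ^ 2 := by linarith only [h12]
        have h2 : D ≤ Real.sqrt (2 * τ * A ^ 2) := by
          rw [hDdef, h2q]; exact Real.sqrt_le_sqrt h1
        rwa [show 2 * τ * A ^ 2 = (2 * τ) * A ^ 2 by ring, Real.sqrt_mul (by positivity) _,
          Real.sqrt_sq hA] at h2
      have h32 : τ * (32 * L4 ^ 4) ≤ L2 ^ 2 := by
        rw [← le_div_iff₀ (by positivity : (0:ℝ) < 32 * L4 ^ 4)]
        exact hτ2
      have h2τ : 2 * τ ≤ (L2 / (3 * L4 ^ 2)) ^ 2 := by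
        rw [div_pow, le_div_iff₀ (by positivity : (0:ℝ) < (3 * L4 ^ 2) ^ 2)]
        have hp : (0:ℝ) ≤ τ * L4 ^ 4 := by positivity
        linarith only [h32, hp]
      have hs3 : 3 * L4 ^ 2 * Real.sqrt (2 * τ) ≤ L2 := by
        have h := (Real.sqrt_le_sqrt h2τ).trans_eq (Real.sqrt_sq (by positivity))
        rw [le_div_iff₀ (by positivity : (0:ℝ) < 3 * L4 ^ 2)] at h
        linarith [h]
      have hdiv : L2 * (A * a ^ 2) / (Real.sqrt (2 * τ) * A) ≤ L2 * (A * a ^ 2) / D :=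
        div_le_div_of_nonneg_left (by positivity) hD0 hDle
      have heq : L2 * (A * a ^ 2) / (Real.sqrt (2 * τ) * A) = L2 * a ^ 2 / Real.sqrt (2 * τ) := by
        field_simp
      have hfin : 3 * L4 ^ 2 * a ^ 2 ≤ L2 * a ^ 2 / Real.sqrt (2 * τ) := by
        rw [le_div_iff₀ hs0]
        have := mul_le_mul_of_nonneg_right hs3 (sq_nonneg a)
        linarith only [this]
      have hb2 : (0:ℝ) ≤ 3 * L4 ^ 2 * b ^ 2 := by positivity
      rw [heq] at hdiv
      linarith
  have haξ : a ^ 2 = ξ ^ 2 := by rw [hadef]; exact sq_abs ξ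
  rw [← haξ]
  linarith only [hT1, h23, hkey]
end

section
/- Let (O, 𝒜, μ) be a measure space with μ(O) < ∞, let q > 0, and let f, g : ℝ → ℝ and w : ℝ → ℝ with w(ξ) ≥ 0 for all ξ. Assume there are positive constants L₁, L₂, L₃, L₄ such that ξ·f(ξ) + w(ξ)·g(ξ)² ≤ L₁ − L₂·|ξ|^{q+2} and |f(ξ)| ≤ L₃ + L₄·|ξ|^{q+1} for all ξ ∈ ℝ. Then there exist constants K > 0 and c > 0, depending only on q, L₁, L₂, L₃, L₄, such that for every τ with 0 < τ ≤ min{1, L₂²/(32·L₄⁴)} and every measurable function u : O → ℝ with ∫ u² dμ < ∞, one has ∫ (τ·f_τ(u(x))² + u(x)·f_τ(u(x)) + w(u(x))·g_τ(u(x))²) dμ(x) ≤ K·μ(O) − c·∫ u(x)² dμ(x) (in particular the integrand on the left has a well-defined integral bounded above by the right-hand side, e.g. in the sense that the positive part is integrable whenever u ∈ L²(μ)). -/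
open Real MeasureTheory
open scoped ENNReal

set_option maxHeartbeats 1000000
section TamedAux

private lemma le_of_sq_le_sq' {x y : ℝ} (hx : 0 ≤ x) (hy : 0 ≤ y) (h : x ^ 2 ≤ y ^ 2) : x ≤ y := by
  nlinarith [sq_nonneg (x - y), sq_nonneg (x + y)]

private lemma aux_pointwise (L1 L2 L3 L4 τ s a P Fsq WG : ℝ)
    (hL1 : 0 < L1) (hL2 : 0 < L2) (hL3 : 0 < L3) (hL4 : 0 < L4)
    (hτ : 0 < τ) (hτ1 : τ ≤ 1) (hτ32 : 32 * L4 ^ 4 * τ ≤ L2 ^ 2)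
    (hs : 0 < s) (ha : 0 ≤ a) (hsa : a ^ 2 - 1 ≤ s * a ^ 2)
    (hWG : 0 ≤ WG) (hFsq : Fsq ≤ (L3 + L4 * s * a) ^ 2) (hFsq0 : 0 ≤ Fsq)
    (hP : P + WG ≤ L1 - L2 * (s * a ^ 2)) :
    τ * Fsq / (1 + τ * s ^ 2) + P / Real.sqrt (1 + τ * s ^ 2) + WG / (1 + Real.sqrt τ * s)
      ≤ (L1 + 2 * L3 ^ 2 + L2 / 4) - min (L2 / 4) (2 * L4 ^ 2) * a ^ 2 := by
  set t := Real.sqrt τ with htdef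
  have ht : 0 < t := Real.sqrt_pos.mpr hτ
  have ht2 : t ^ 2 = τ := Real.sq_sqrt hτ.le
  have hts2eq : τ * s ^ 2 = t ^ 2 * s ^ 2 := by rw [ht2]
  set D := 1 + τ * s ^ 2 with hDdef
  have hD1 : 1 ≤ D := by
    have := mul_pos hτ (pow_pos hs 2); simp only [hDdef]; linarith
  have hD0 : 0 < D := by linarith
  set r := Real.sqrt D with hrdef
  have hr2 : r ^ 2 = D := Real.sq_sqrt hD0.le
  have hr1 : 1 ≤ r := by
    rw [show (1:ℝ) = Real.sqrt 1 from (Real.sqrt_one).symm]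
    exact Real.sqrt_le_sqrt hD1
  have hr0 : 0 < r := by linarith
  have hE0 : 0 < 1 + t * s := by positivity
  have hrE : r ≤ 1 + t * s := by
    have h1 : D ≤ (1 + t * s) ^ 2 := by
      have h2ts : 0 < t * s := mul_pos ht hs
      simp only [hDdef]; nlinarith [h2ts, hts2eq]
    calc r ≤ Real.sqrt ((1 + t * s) ^ 2) := Real.sqrt_le_sqrt h1
      _ = 1 + t * s := Real.sqrt_sq hE0.le
  have hDts : 2 * (t * s) ≤ D := by
    simp only [hDdef]; nlinarith [sq_nonneg (1 - t * s), hts2eq]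
  -- bound the three terms
  have b1 : WG / (1 + t * s) ≤ WG / r := by gcongr
  have b2 : P / r + WG / r ≤ (L1 - L2 * (s * a ^ 2)) / r := by
    rw [← add_div]
    exact div_le_div_of_nonneg_right hP hr0.le
  have b3 : (L1 - L2 * (s * a ^ 2)) / r ≤ L1 - L2 * (s * a ^ 2) / r := by
    rw [sub_div]
    have : L1 / r ≤ L1 := div_le_self hL1.le hr1
    linarith
  have hFsq2 : Fsq ≤ 2 * L3 ^ 2 + 2 * L4 ^ 2 * (s ^ 2 * a ^ 2) := by
    nlinarith [hFsq, sq_nonneg (L3 - L4 * s * a)]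
  have b4 : τ * Fsq / D ≤ 2 * L3 ^ 2 + 2 * τ * L4 ^ 2 * (s ^ 2 * a ^ 2) / D := by
    have h0 : τ * Fsq ≤ τ * (2 * L3 ^ 2) + 2 * τ * L4 ^ 2 * (s ^ 2 * a ^ 2) := by
      have := mul_le_mul_of_nonneg_left hFsq2 hτ.le
      nlinarith [this]
    have h1 : τ * Fsq / D ≤ (τ * (2 * L3 ^ 2) + 2 * τ * L4 ^ 2 * (s ^ 2 * a ^ 2)) / D :=
      div_le_div_of_nonneg_right h0 hD0.le
    have h2 : (τ * (2 * L3 ^ 2) + 2 * τ * L4 ^ 2 * (s ^ 2 * a ^ 2)) / D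
        = τ * (2 * L3 ^ 2) / D + 2 * τ * L4 ^ 2 * (s ^ 2 * a ^ 2) / D := add_div _ _ _
    have h3 : τ * (2 * L3 ^ 2) / D ≤ τ * (2 * L3 ^ 2) := div_le_self (by positivity) hD1
    have h4 : τ * (2 * L3 ^ 2) ≤ 2 * L3 ^ 2 := by
      have := mul_le_mul_of_nonneg_right hτ1 (by positivity : (0:ℝ) ≤ 2 * L3 ^ 2)
      linarith
    linarith
  -- the key remaining estimate
  have key : 2 * τ * L4 ^ 2 * (s ^ 2 * a ^ 2) / D - L2 * (s * a ^ 2) / r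
      ≤ L2 / 4 - min (L2 / 4) (2 * L4 ^ 2) * a ^ 2 := by
    have hmin1 : min (L2 / 4) (2 * L4 ^ 2) ≤ L2 / 4 := min_le_left _ _
    have hmin2 : min (L2 / 4) (2 * L4 ^ 2) ≤ 2 * L4 ^ 2 := min_le_right _ _
    rcases le_or_gt (τ * s ^ 2) 1 with hc | hc
    · -- case A
      have hrle : r ≤ 2 := by
        have h4 : D ≤ 4 := by linarith
        calc r ≤ Real.sqrt 4 := Real.sqrt_le_sqrt h4
          _ = 2 := by rw [show (4:ℝ) = 2 ^ 2 by norm_num, Real.sqrt_sq (by norm_num : (0:ℝ) ≤ 2)]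
      have A1 : 2 * τ * L4 ^ 2 * (s ^ 2 * a ^ 2) / D ≤ t * L4 ^ 2 * (s * a ^ 2) := by
        have h1 : 2 * τ * L4 ^ 2 * (s ^ 2 * a ^ 2) / D
            ≤ 2 * τ * L4 ^ 2 * (s ^ 2 * a ^ 2) / (2 * (t * s)) := by
          gcongr
        have h2 : 2 * τ * L4 ^ 2 * (s ^ 2 * a ^ 2) / (2 * (t * s)) = t * L4 ^ 2 * (s * a ^ 2) := by
          rw [← ht2]; field_simp; try ring
        linarith
      have A2 : L2 * (s * a ^ 2) / 2 ≤ L2 * (s * a ^ 2) / r := by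
        have hnum : (0:ℝ) ≤ L2 * (s * a ^ 2) := by positivity
        exact div_le_div_of_nonneg_left hnum hr0 hrle
      have A3 : t * L4 ^ 2 ≤ L2 / 4 := by
        refine le_of_sq_le_sq' (by positivity) (by positivity) ?_
        have e : (t * L4 ^ 2) ^ 2 = τ * L4 ^ 4 := by
          rw [mul_pow]; rw [ht2]; ring
        rw [e]
        nlinarith [hτ32, sq_nonneg L2]
      have A4 : t * L4 ^ 2 * (s * a ^ 2) ≤ L2 / 4 * (s * a ^ 2) :=
        mul_le_mul_of_nonneg_right A3 (by positivity)
      have A5 : L2 / 4 * (a ^ 2 - 1) ≤ L2 / 4 * (s * a ^ 2) :=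
        mul_le_mul_of_nonneg_left hsa (by positivity)
      have A6 : min (L2 / 4) (2 * L4 ^ 2) * a ^ 2 ≤ L2 / 4 * a ^ 2 :=
        mul_le_mul_of_nonneg_right hmin1 (sq_nonneg a)
      linarith [A1, A2, A4, A5, A6]
    · -- case B
      have hts2 : 0 < τ * s ^ 2 := by positivity
      have hD2 : τ * s ^ 2 ≤ D := by
        simp only [hDdef]; linarith
      have B1 : 2 * τ * L4 ^ 2 * (s ^ 2 * a ^ 2) / D ≤ 2 * L4 ^ 2 * a ^ 2 := by
        have h1 : 2 * τ * L4 ^ 2 * (s ^ 2 * a ^ 2) / D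
            ≤ 2 * τ * L4 ^ 2 * (s ^ 2 * a ^ 2) / (τ * s ^ 2) := by
          gcongr
        have h2 : 2 * τ * L4 ^ 2 * (s ^ 2 * a ^ 2) / (τ * s ^ 2) = 2 * L4 ^ 2 * a ^ 2 := by
          field_simp; try ring
        linarith
      have hsq2 : (0:ℝ) ≤ Real.sqrt 2 := Real.sqrt_nonneg 2
      have hsq2' : (Real.sqrt 2) ^ 2 = 2 := Real.sq_sqrt (by norm_num)
      have B2 : r ≤ Real.sqrt 2 * (t * s) := by
        have h1 : D ≤ (Real.sqrt 2 * (t * s)) ^ 2 := by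
          have : (Real.sqrt 2 * (t * s)) ^ 2 = 2 * (τ * s ^ 2) := by
            simp only [mul_pow]; rw [hsq2', ht2]; try ring
          rw [this]; linarith
        calc r ≤ Real.sqrt ((Real.sqrt 2 * (t * s)) ^ 2) := Real.sqrt_le_sqrt h1
          _ = Real.sqrt 2 * (t * s) := Real.sqrt_sq (by positivity)
      have B3 : L2 * (s * a ^ 2) / (Real.sqrt 2 * (t * s)) ≤ L2 * (s * a ^ 2) / r := by
        have hnum : (0:ℝ) ≤ L2 * (s * a ^ 2) := by positivity
        exact div_le_div_of_nonneg_left hnum hr0 B2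
      have B3' : L2 * (s * a ^ 2) / (Real.sqrt 2 * (t * s)) = L2 / (Real.sqrt 2 * t) * a ^ 2 := by
        field_simp
        try ring
      have B4 : 4 * L4 ^ 2 ≤ L2 / (Real.sqrt 2 * t) := by
        rw [le_div_iff₀ (by positivity)]
        have hx : 0 ≤ 4 * L4 ^ 2 * (Real.sqrt 2 * t) := by positivity
        have h1 : (4 * L4 ^ 2 * (Real.sqrt 2 * t)) ^ 2 ≤ L2 ^ 2 := by
          have : (4 * L4 ^ 2 * (Real.sqrt 2 * t)) ^ 2 = 32 * L4 ^ 4 * τ := by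
            simp only [mul_pow]; rw [hsq2', ht2]; try ring
          rw [this]; exact hτ32
        exact le_of_sq_le_sq' hx hL2.le h1
      have B5 : 4 * L4 ^ 2 * a ^ 2 ≤ L2 / (Real.sqrt 2 * t) * a ^ 2 :=
        mul_le_mul_of_nonneg_right B4 (sq_nonneg a)
      have B6 : min (L2 / 4) (2 * L4 ^ 2) * a ^ 2 ≤ 2 * L4 ^ 2 * a ^ 2 :=
        mul_le_mul_of_nonneg_right hmin2 (sq_nonneg a)
      linarith [B1, B3, B3'.ge, B3'.le, B5, B6, hL2.le]
  linarith [b1, b2, b3, b4, key]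

private lemma pointwise_bound (q : ℝ) (hq : 0 < q) (f g w : ℝ → ℝ) (hw : ∀ ξ : ℝ, 0 ≤ w ξ)
    (L1 L2 L3 L4 : ℝ) (hL1 : 0 < L1) (hL2 : 0 < L2) (hL3 : 0 < L3) (hL4 : 0 < L4)
    (hcoe : ∀ ξ : ℝ, ξ * f ξ + w ξ * (g ξ) ^ 2 ≤ L1 - L2 * |ξ| ^ (q + 2))
    (hgrow : ∀ ξ : ℝ, |f ξ| ≤ L3 + L4 * |ξ| ^ (q + 1))
    (τ : ℝ) (hτ0 : 0 < τ) (hτ1 : τ ≤ 1) (hτ32 : 32 * L4 ^ 4 * τ ≤ L2 ^ 2) (ξ : ℝ) :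
    τ * (fTam f q τ ξ) ^ 2 + ξ * fTam f q τ ξ + w ξ * (gTam g q τ ξ) ^ 2
      ≤ (L1 + 2 * L3 ^ 2 + L2 / 4) - min (L2 / 4) (2 * L4 ^ 2) * ξ ^ 2 := by
  by_cases hξ : ξ = 0
  · subst hξ
    have h0 : |(0:ℝ)| = 0 := abs_zero
    have h2q : |(0:ℝ)| ^ (2 * q) = 0 := by
      rw [h0]; exact Real.zero_rpow (by positivity)
    have hq1 : |(0:ℝ)| ^ (q + 1) = 0 := by
      rw [h0]; exact Real.zero_rpow (by positivity)
    have hq2 : |(0:ℝ)| ^ (q + 2) = 0 := by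
      rw [h0]; exact Real.zero_rpow (by positivity)
    have hqq : |(0:ℝ)| ^ q = 0 := by
      rw [h0]; exact Real.zero_rpow (by positivity)
    have hf : |f 0| ≤ L3 := by have := hgrow 0; rw [hq1] at this; linarith
    have hc : w 0 * (g 0) ^ 2 ≤ L1 := by have := hcoe 0; rw [hq2] at this; linarith
    have hfT : fTam f q τ 0 = f 0 := by
      rw [fTam, h2q, mul_zero, add_zero, Real.sqrt_one, div_one]
    have hgT : (gTam g q τ 0) ^ 2 = (g 0) ^ 2 := by
      rw [gTam, hqq, mul_zero, add_zero, Real.sqrt_one, div_one]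
    rw [hfT, hgT]
    have hf2 : (f 0) ^ 2 ≤ L3 ^ 2 := by nlinarith [sq_abs (f 0), abs_nonneg (f 0)]
    have hτf2 : τ * (f 0) ^ 2 ≤ L3 ^ 2 := by nlinarith [sq_nonneg (f 0)]
    have hmin : 0 ≤ min (L2 / 4) (2 * L4 ^ 2) := le_min (by positivity) (by positivity)
    nlinarith [hmin]
  · have ha : 0 < |ξ| := abs_pos.mpr hξ
    set s := |ξ| ^ q with hsdef
    have hs : 0 < s := Real.rpow_pos_of_pos ha q
    have h2q : |ξ| ^ (2 * q) = s ^ 2 := by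
      rw [show (2 * q) = q * 2 by ring, Real.rpow_mul (abs_nonneg ξ)]
      norm_num [hsdef]
    have hq2 : |ξ| ^ (q + 2) = s * |ξ| ^ 2 := by
      rw [Real.rpow_add ha]
      norm_num [hsdef]
    have hq1 : |ξ| ^ (q + 1) = s * |ξ| := by
      rw [Real.rpow_add ha, Real.rpow_one]
    have hfT : fTam f q τ ξ = f ξ / Real.sqrt (1 + τ * s ^ 2) := by
      rw [fTam, h2q]
    have hgT : gTam g q τ ξ = g ξ / Real.sqrt (1 + Real.sqrt τ * s) := by
      rw [gTam]
    have hD0 : (0:ℝ) < 1 + τ * s ^ 2 := by positivity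
    have hE0 : (0:ℝ) < 1 + Real.sqrt τ * s := by
      have := Real.sqrt_nonneg τ; positivity
    have hfT2 : (fTam f q τ ξ) ^ 2 = (f ξ) ^ 2 / (1 + τ * s ^ 2) := by
      rw [hfT, div_pow, Real.sq_sqrt hD0.le]
    have hgT2 : (gTam g q τ ξ) ^ 2 = (g ξ) ^ 2 / (1 + Real.sqrt τ * s) := by
      rw [hgT, div_pow, Real.sq_sqrt hE0.le]
    have hP : ξ * f ξ + w ξ * (g ξ) ^ 2 ≤ L1 - L2 * (s * |ξ| ^ 2) := by
      have := hcoe ξ; rw [hq2] at this; linarith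
    have hF : |f ξ| ≤ L3 + L4 * s * |ξ| := by
      have := hgrow ξ; rw [hq1] at this; linarith
    have hFsq : (f ξ) ^ 2 ≤ (L3 + L4 * s * |ξ|) ^ 2 := by
      have h1 : (0:ℝ) ≤ L3 + L4 * s * |ξ| := by positivity
      nlinarith [sq_abs (f ξ), abs_nonneg (f ξ), hF]
    have hsa : |ξ| ^ 2 - 1 ≤ s * |ξ| ^ 2 := by
      rcases le_or_gt 1 |ξ| with h1 | h1
      · have hs1 : 1 ≤ s := Real.one_le_rpow h1 hq.le
        nlinarith [sq_nonneg ξ, sq_abs ξ]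
      · have h2 : |ξ| ^ 2 ≤ 1 := by nlinarith [ha.le]
        nlinarith [mul_nonneg hs.le (sq_nonneg |ξ|)]
    have key := aux_pointwise L1 L2 L3 L4 τ s |ξ| (ξ * f ξ) ((f ξ) ^ 2) (w ξ * (g ξ) ^ 2)
      hL1 hL2 hL3 hL4 hτ0 hτ1 hτ32 hs (abs_nonneg ξ) hsa
      (mul_nonneg (hw ξ) (sq_nonneg _)) hFsq (sq_nonneg _) hP
    rw [hfT2, hfT, hgT2]
    have hxi2 : |ξ| ^ 2 = ξ ^ 2 := sq_abs ξ
    rw [hxi2] at key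
    calc τ * ((f ξ) ^ 2 / (1 + τ * s ^ 2)) + ξ * (f ξ / Real.sqrt (1 + τ * s ^ 2)) +
          w ξ * ((g ξ) ^ 2 / (1 + Real.sqrt τ * s))
        = τ * (f ξ) ^ 2 / (1 + τ * s ^ 2) + (ξ * f ξ) / Real.sqrt (1 + τ * s ^ 2) +
          (w ξ * (g ξ) ^ 2) / (1 + Real.sqrt τ * s) := by ring
      _ ≤ _ := key

private lemma coe_ennreal_eq_toReal (x : ℝ≥0∞) (hx : x ≠ ⊤) :
    (x : EReal) = ((x.toReal : ℝ) : EReal) := by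
  conv_lhs => rw [← ENNReal.ofReal_toReal hx]
  rw [EReal.coe_ennreal_ofReal, max_eq_left ENNReal.toReal_nonneg]

private lemma lintegral_bound {O : Type*} [MeasurableSpace O] (μ : Measure O)
    (Φ b : O → ℝ) (hbint : Integrable b μ) (h : ∀ x, Φ x ≤ b x) :
    (∫⁻ x, ENNReal.ofReal (Φ x) ∂μ) < ⊤ ∧
    ((∫⁻ x, ENNReal.ofReal (Φ x) ∂μ : ℝ≥0∞) : EReal) -
      ((∫⁻ x, ENNReal.ofReal (-Φ x) ∂μ : ℝ≥0∞) : EReal) ≤ ((∫ x, b x ∂μ : ℝ) : EReal) := by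
  have hA : ∫⁻ x, ENNReal.ofReal (Φ x) ∂μ ≤ ∫⁻ x, ENNReal.ofReal (b x) ∂μ :=
    lintegral_mono fun x => ENNReal.ofReal_le_ofReal (h x)
  have hBmono : ∫⁻ x, ENNReal.ofReal (-b x) ∂μ ≤ ∫⁻ x, ENNReal.ofReal (-Φ x) ∂μ :=
    lintegral_mono fun x => ENNReal.ofReal_le_ofReal (neg_le_neg (h x))
  have habs : ∀ y : ℝ, ENNReal.ofReal y ≤ (‖y‖₊ : ℝ≥0∞) := by
    intro y
    rw [← enorm_eq_nnnorm, Real.enorm_eq_ofReal_abs]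
    exact ENNReal.ofReal_le_ofReal (le_abs_self _)
  have habs' : ∀ y : ℝ, ENNReal.ofReal (-y) ≤ (‖y‖₊ : ℝ≥0∞) := by
    intro y
    rw [← enorm_eq_nnnorm, Real.enorm_eq_ofReal_abs]
    exact ENNReal.ofReal_le_ofReal (neg_le_abs _)
  have hA'fin : ∫⁻ x, ENNReal.ofReal (b x) ∂μ < ⊤ :=
    lt_of_le_of_lt (lintegral_mono fun x => habs (b x)) hbint.2
  have hB'fin : ∫⁻ x, ENNReal.ofReal (-b x) ∂μ < ⊤ :=
    lt_of_le_of_lt (lintegral_mono fun x => habs' (b x)) hbint.2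
  refine ⟨lt_of_le_of_lt hA hA'fin, ?_⟩
  have h1 : ((∫⁻ x, ENNReal.ofReal (Φ x) ∂μ : ℝ≥0∞) : EReal) -
      ((∫⁻ x, ENNReal.ofReal (-Φ x) ∂μ : ℝ≥0∞) : EReal) ≤
      ((∫⁻ x, ENNReal.ofReal (b x) ∂μ : ℝ≥0∞) : EReal) -
      ((∫⁻ x, ENNReal.ofReal (-b x) ∂μ : ℝ≥0∞) : EReal) :=
    EReal.sub_le_sub (EReal.coe_ennreal_le_coe_ennreal_iff.mpr hA)
      (EReal.coe_ennreal_le_coe_ennreal_iff.mpr hBmono)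
  have hint := integral_eq_lintegral_pos_part_sub_lintegral_neg_part hbint
  have e1 := coe_ennreal_eq_toReal _ hA'fin.ne
  have e2 := coe_ennreal_eq_toReal _ hB'fin.ne
  refine h1.trans (le_of_eq ?_)
  rw [e1, e2, ← EReal.coe_sub, ← hint]

end TamedAux

theorem tamed_coercive_integrated
    {O : Type*} [MeasurableSpace O] (μ : Measure O) (hμ : μ Set.univ < ⊤)
    (q : ℝ) (hq : 0 < q) (f g w : ℝ → ℝ) (hw : ∀ ξ : ℝ, 0 ≤ w ξ)
    (L1 L2 L3 L4 : ℝ) (hL1 : 0 < L1) (hL2 : 0 < L2) (hL3 : 0 < L3) (hL4 : 0 < L4)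
    (hcoe : ∀ ξ : ℝ, ξ * f ξ + w ξ * (g ξ) ^ 2 ≤ L1 - L2 * |ξ| ^ (q + 2))
    (hgrow : ∀ ξ : ℝ, |f ξ| ≤ L3 + L4 * |ξ| ^ (q + 1)) :
    ∃ K c : ℝ, 0 < K ∧ 0 < c ∧
      ∀ τ : ℝ, 0 < τ → τ ≤ min 1 (L2 ^ 2 / (32 * L4 ^ 4)) →
        ∀ u : O → ℝ, Measurable u → Integrable (fun x => (u x) ^ 2) μ →
          -- the positive part of the integrand is integrable
          (∫⁻ x, ENNReal.ofReal
              (τ * (fTam f q τ (u x)) ^ 2 + u x * fTam f q τ (u x) +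
                w (u x) * (gTam g q τ (u x)) ^ 2) ∂μ) < ⊤ ∧
          -- the integral, in the extended sense, is bounded by the right-hand side
          ((∫⁻ x, ENNReal.ofReal
              (τ * (fTam f q τ (u x)) ^ 2 + u x * fTam f q τ (u x) +
                w (u x) * (gTam g q τ (u x)) ^ 2) ∂μ : ℝ≥0∞) : EReal) -
            ((∫⁻ x, ENNReal.ofReal
              (-(τ * (fTam f q τ (u x)) ^ 2 + u x * fTam f q τ (u x) +
                w (u x) * (gTam g q τ (u x)) ^ 2)) ∂μ : ℝ≥0∞) : EReal) ≤
          ((K * (μ Set.univ).toReal - c * ∫ x, (u x) ^ 2 ∂μ : ℝ) : EReal) := by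
  have hfin : IsFiniteMeasure μ := ⟨hμ⟩
  refine ⟨L1 + 2 * L3 ^ 2 + L2 / 4, min (L2 / 4) (2 * L4 ^ 2), by positivity,
    lt_min (by positivity) (by positivity), ?_⟩
  intro τ hτ0 hτle u hu hu2
  have hτ1 : τ ≤ 1 := hτle.trans (min_le_left _ _)
  have hτ32 : 32 * L4 ^ 4 * τ ≤ L2 ^ 2 := by
    have h := hτle.trans (min_le_right _ _)
    rw [le_div_iff₀ (by positivity)] at h
    linarith
  have hbint : Integrable (fun x => (L1 + 2 * L3 ^ 2 + L2 / 4) -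
      min (L2 / 4) (2 * L4 ^ 2) * (u x) ^ 2) μ :=
    (integrable_const _).sub (hu2.const_mul _)
  have hpt : ∀ x : O,
      τ * (fTam f q τ (u x)) ^ 2 + u x * fTam f q τ (u x) + w (u x) * (gTam g q τ (u x)) ^ 2
        ≤ (L1 + 2 * L3 ^ 2 + L2 / 4) - min (L2 / 4) (2 * L4 ^ 2) * (u x) ^ 2 :=
    fun x => pointwise_bound q hq f g w hw L1 L2 L3 L4 hL1 hL2 hL3 hL4 hcoe hgrow
      τ hτ0 hτ1 hτ32 (u x)
  have H := lintegral_bound μ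
    (fun x => τ * (fTam f q τ (u x)) ^ 2 + u x * fTam f q τ (u x) +
      w (u x) * (gTam g q τ (u x)) ^ 2)
    (fun x => (L1 + 2 * L3 ^ 2 + L2 / 4) - min (L2 / 4) (2 * L4 ^ 2) * (u x) ^ 2)
    hbint hpt
  have hib : (∫ x, ((L1 + 2 * L3 ^ 2 + L2 / 4) -
      min (L2 / 4) (2 * L4 ^ 2) * (u x) ^ 2) ∂μ) =
      (L1 + 2 * L3 ^ 2 + L2 / 4) * (μ Set.univ).toReal -
        min (L2 / 4) (2 * L4 ^ 2) * ∫ x, (u x) ^ 2 ∂μ := by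
    rw [integral_sub (integrable_const _) (hu2.const_mul _), integral_const,
      integral_const_mul, smul_eq_mul, mul_comm, measureReal_def]
  rw [hib] at H
  exact H
end

section
/- Let q ≥ 1 be a real number and let f : ℝ → ℝ be continuously differentiable with |f'(ξ)| ≤ K₂·(1+|ξ|^{q}) and |f(ξ)| ≤ L₃ + L₄·|ξ|^{q+1} for all ξ ∈ ℝ, where K₂, L₃, L₄ are positive constants. Then there exists a constant C > 0, depending only on q, K₂, L₃, L₄, such that for every τ with 0 < τ ≤ 1 the tamed function f_τ is differentiable on ℝ and |f_τ'(ξ)| ≤ C·τ^{-1/2} for all ξ ∈ ℝ. -/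
open Real

lemma abs_rpow_two_mul (q ξ : ℝ) : |ξ| ^ (2 * q) = ((ξ ^ 2 : ℝ)) ^ q := by
  have h : ((2 : ℕ) : ℝ) * q = 2 * q := by push_cast; ring
  rw [← sq_abs ξ, ← Real.rpow_natCast |ξ| 2, ← Real.rpow_mul (abs_nonneg ξ), h]

lemma fTam_hasDerivAt (f : ℝ → ℝ) (hf : ContDiff ℝ 1 f) (q τ : ℝ) (hq : 1 ≤ q)
    (hτ : 0 < τ) (ξ : ℝ) :
    HasDerivAt (fun x => fTam f q τ x)
      ((deriv f ξ * Real.sqrt (1 + τ * (ξ ^ 2) ^ q)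
        - f ξ * (1 / (2 * Real.sqrt (1 + τ * (ξ ^ 2) ^ q)) *
            (τ * (q * (ξ ^ 2) ^ (q - 1) * (2 * ξ)))))
        / Real.sqrt (1 + τ * (ξ ^ 2) ^ q) ^ 2) ξ := by
  have hG : ∀ x : ℝ, (0 : ℝ) < 1 + τ * (x ^ 2) ^ q := by
    intro x
    have : (0:ℝ) ≤ (x ^ 2) ^ q := Real.rpow_nonneg (sq_nonneg x) q
    nlinarith
  have hfun : (fun x => fTam f q τ x) = fun x => f x / Real.sqrt (1 + τ * (x ^ 2) ^ q) := by
    funext x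
    rw [fTam, abs_rpow_two_mul]
  rw [hfun]
  have hu : HasDerivAt (fun x : ℝ => (x ^ 2) ^ q) (q * (ξ ^ 2) ^ (q - 1) * (2 * ξ)) ξ := by
    have h2 : HasDerivAt (fun x : ℝ => x ^ 2) (2 * ξ) ξ := by
      simpa using hasDerivAt_pow 2 ξ
    have h3 := h2.rpow_const (Or.inr hq)
    convert h3 using 1
    ring
  have hg : HasDerivAt (fun x : ℝ => 1 + τ * (x ^ 2) ^ q)
      (τ * (q * (ξ ^ 2) ^ (q - 1) * (2 * ξ))) ξ :=
    HasDerivAt.const_add 1 (HasDerivAt.const_mul τ hu)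
  have hs : HasDerivAt (fun x => Real.sqrt (1 + τ * (x ^ 2) ^ q))
      (1 / (2 * Real.sqrt (1 + τ * (ξ ^ 2) ^ q)) * (τ * (q * (ξ ^ 2) ^ (q - 1) * (2 * ξ)))) ξ := by
    have := (Real.hasDerivAt_sqrt (ne_of_gt (hG ξ))).comp ξ hg
    simpa [Function.comp_def] using this
  have hne : Real.sqrt (1 + τ * (ξ ^ 2) ^ q) ≠ 0 :=
    ne_of_gt (Real.sqrt_pos.mpr (hG ξ))
  exact ((hf.differentiable one_ne_zero ξ).hasDerivAt).div hs hne

set_option maxHeartbeats 1000000 in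
theorem tamed_drift_deriv_bound
    (q : ℝ) (hq : 1 ≤ q) (f : ℝ → ℝ) (hf : ContDiff ℝ 1 f)
    (K2 L3 L4 : ℝ) (hK2 : 0 < K2) (hL3 : 0 < L3) (hL4 : 0 < L4)
    (hf' : ∀ ξ : ℝ, |deriv f ξ| ≤ K2 * (1 + |ξ| ^ q))
    (hgrow : ∀ ξ : ℝ, |f ξ| ≤ L3 + L4 * |ξ| ^ (q + 1)) :
    ∃ C : ℝ, 0 < C ∧
      ∀ τ : ℝ, 0 < τ → τ ≤ 1 →
        Differentiable ℝ (fun ξ => fTam f q τ ξ) ∧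
        ∀ ξ : ℝ, |deriv (fun ξ => fTam f q τ ξ) ξ| ≤ C * τ ^ (-(1 : ℝ) / 2) := by
  have hq0 : (0:ℝ) < q := lt_of_lt_of_le one_pos hq
  refine ⟨2 * K2 + 2 * q * (L3 + L4), by nlinarith, ?_⟩
  intro τ hτ hτ1
  have hdiff : Differentiable ℝ (fun ξ => fTam f q τ ξ) := fun ξ =>
    (fTam_hasDerivAt f hf q τ hq hτ ξ).differentiableAt
  refine ⟨hdiff, ?_⟩
  intro ξ
  have ha0 : (0:ℝ) ≤ |ξ| := abs_nonneg ξ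
  set a : ℝ := |ξ| with hadef
  -- basic quantities
  have hGpos : (0:ℝ) < 1 + τ * (ξ ^ 2) ^ q := by
    have : (0:ℝ) ≤ (ξ ^ 2) ^ q := Real.rpow_nonneg (sq_nonneg ξ) q
    nlinarith
  set G : ℝ := 1 + τ * (ξ ^ 2) ^ q with hGdef
  set s : ℝ := Real.sqrt G with hsdef
  have hG1 : (1:ℝ) ≤ G := by
    have : (0:ℝ) ≤ (ξ ^ 2) ^ q := Real.rpow_nonneg (sq_nonneg ξ) q
    have := mul_nonneg hτ.le this
    rw [hGdef]; linarith
  have hs1 : (1:ℝ) ≤ s := Real.one_le_sqrt.mpr hG1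
  have hs0 : (0:ℝ) < s := lt_of_lt_of_le one_pos hs1
  clear_value a G s
  -- rewriting powers of ξ² as powers of a
  have hsq : (ξ ^ 2 : ℝ) ^ q = a ^ (2 * q) := by
    rw [hadef]; exact (abs_rpow_two_mul q ξ).symm
  have hsq' : (ξ ^ 2 : ℝ) ^ (q - 1) = a ^ (2 * q - 2) := by
    have h : ((2 : ℕ) : ℝ) * (q - 1) = 2 * q - 2 := by push_cast; ring
    rw [hadef, ← sq_abs ξ, ← Real.rpow_natCast |ξ| 2, ← Real.rpow_mul (abs_nonneg ξ), h]
  -- τ^{-1/2}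
  set T : ℝ := τ ^ (-(1:ℝ) / 2) with hTdef
  have hT0 : (0:ℝ) < T := Real.rpow_pos_of_pos hτ _
  have hT1 : (1:ℝ) ≤ T := by
    calc (1:ℝ) = τ ^ (0:ℝ) := (Real.rpow_zero τ).symm
    _ ≤ T := Real.rpow_le_rpow_of_exponent_ge hτ hτ1 (by norm_num)
  have hτT : τ ≤ T := by
    calc τ = τ ^ (1:ℝ) := (Real.rpow_one τ).symm
    _ ≤ T := Real.rpow_le_rpow_of_exponent_ge hτ hτ1 (by norm_num)
  have hTst : T * Real.sqrt τ = 1 := by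
    rw [Real.sqrt_eq_rpow, hTdef, ← Real.rpow_add hτ]
    norm_num
  clear_value T
  -- √τ · a^q ≤ s
  have hkey : Real.sqrt τ * a ^ q ≤ s := by
    have h1 : Real.sqrt τ * a ^ q = Real.sqrt (τ * a ^ (2 * q)) := by
      rw [Real.sqrt_mul hτ.le]
      congr 1
      rw [Real.sqrt_eq_rpow, ← Real.rpow_mul ha0]
      congr 1
      ring
    have h2 : τ * a ^ (2 * q) ≤ G := by
      rw [hGdef, hsq]; linarith
    rw [h1, hsdef]
    exact Real.sqrt_le_sqrt h2
  have hTs : a ^ q ≤ T * s := by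
    have h1 : T * (Real.sqrt τ * a ^ q) ≤ T * s := mul_le_mul_of_nonneg_left hkey hT0.le
    calc a ^ q = T * Real.sqrt τ * a ^ q := by rw [hTst, one_mul]
    _ = T * (Real.sqrt τ * a ^ q) := by ring
    _ ≤ T * s := h1
  -- τ a^{3q} ≤ T s³
  have hcube : τ * a ^ (3 * q) ≤ T * s ^ 3 := by
    have hb : a ^ (3 * q) = (a ^ q) ^ 3 := by
      rw [← Real.rpow_natCast (a ^ q) 3, ← Real.rpow_mul ha0]
      congr 1
      push_cast; ring
    have h1 : (Real.sqrt τ * a ^ q) ^ 3 ≤ s ^ 3 := by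
      apply pow_le_pow_left₀ (by positivity) hkey
    have h3 : (Real.sqrt τ) ^ 3 = τ * Real.sqrt τ := by
      rw [pow_succ, Real.sq_sqrt hτ.le]
    have h4 : T * (Real.sqrt τ * a ^ q) ^ 3 ≤ T * s ^ 3 := mul_le_mul_of_nonneg_left h1 hT0.le
    have h5 : T * (Real.sqrt τ * a ^ q) ^ 3 = τ * (a ^ q) ^ 3 := by
      rw [mul_pow, h3]
      calc T * (τ * Real.sqrt τ * (a ^ q) ^ 3) = T * Real.sqrt τ * (τ * (a ^ q) ^ 3) := by ring
      _ = τ * (a ^ q) ^ 3 := by rw [hTst, one_mul]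
    rw [hb, ← h5]
    exact h4
  have hs3 : (1:ℝ) ≤ s ^ 3 := by
    simpa using pow_le_pow_left₀ zero_le_one hs1 3
  -- exponent arithmetic
  have haa : a ^ (2 * q - 2) * a = a ^ (2 * q - 1) := by
    have hne : (2 * q - 2) + 1 ≠ 0 := by intro h; nlinarith
    have h := Real.rpow_add' ha0 hne
    rw [Real.rpow_one] at h
    rw [← h]
    congr 1
    ring
  -- master polynomial inequality
  have hmaster : (L3 + L4 * a ^ (q + 1)) * a ^ (2 * q - 1) ≤ (L3 + L4) * (1 + a ^ (3 * q)) := by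
    have h3 : (0:ℝ) ≤ a ^ (2 * q - 1) := Real.rpow_nonneg ha0 _
    have h4 : (0:ℝ) ≤ a ^ (3 * q) := Real.rpow_nonneg ha0 _
    rcases le_total a 1 with h | h
    · have h1 : a ^ (q + 1) ≤ 1 := Real.rpow_le_one ha0 h (by linarith)
      have h2 : a ^ (2 * q - 1) ≤ 1 := Real.rpow_le_one ha0 h (by linarith)
      have h5 : (0:ℝ) ≤ a ^ (q + 1) := Real.rpow_nonneg ha0 _
      have h6 : a ^ (q + 1) * a ^ (2 * q - 1) ≤ 1 := mul_le_one₀ h1 h3 h2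
      nlinarith
    · have h0 : (0:ℝ) < a := lt_of_lt_of_le one_pos h
      have h1 : a ^ (2 * q - 1) ≤ a ^ (3 * q) := Real.rpow_le_rpow_of_exponent_le h (by linarith)
      have h2 : a ^ (q + 1) * a ^ (2 * q - 1) = a ^ (3 * q) := by
        rw [← Real.rpow_add h0]
        congr 1
        ring
      nlinarith
  -- derivative value
  have hd := (fTam_hasDerivAt f hf q τ hq hτ ξ).deriv
  rw [hd, ← hGdef, ← hsdef]
  have hsplit : (deriv f ξ * s - f ξ * (1 / (2 * s) * (τ * (q * (ξ ^ 2) ^ (q - 1) * (2 * ξ))))) / s ^ 2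
      = deriv f ξ / s - f ξ * (τ * (q * (ξ ^ 2) ^ (q - 1) * (2 * ξ))) / (2 * s ^ 3) := by
    field_simp
  rw [hsplit]
  -- term 1
  have hterm1 : |deriv f ξ| / s ≤ 2 * K2 * T := by
    have e1 : |deriv f ξ| ≤ K2 * (1 + a ^ q) := by rw [hadef]; exact hf' ξ
    rw [div_le_iff₀ hs0]
    have hTs1 : (1:ℝ) ≤ T * s := by nlinarith
    nlinarith [abs_nonneg (deriv f ξ)]
  -- term 2
  have hterm2 : |f ξ| * |τ * (q * (ξ ^ 2) ^ (q - 1) * (2 * ξ))| / (2 * s ^ 3)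
      ≤ 2 * q * (L3 + L4) * T := by
    have hD : |τ * (q * (ξ ^ 2) ^ (q - 1) * (2 * ξ))| = 2 * (τ * q * a ^ (2 * q - 1)) := by
      rw [hsq']
      rw [abs_mul, abs_mul, abs_mul, abs_of_pos hτ, abs_of_pos hq0,
        abs_of_nonneg (Real.rpow_nonneg ha0 _), abs_mul]
      rw [abs_of_pos (by norm_num : (0:ℝ) < 2), ← hadef, ← haa]
      ring
    rw [hD, div_le_iff₀ (by nlinarith [pow_pos hs0 3] : (0:ℝ) < 2 * s ^ 3)]
    have hfb : |f ξ| ≤ L3 + L4 * a ^ (q + 1) := by rw [hadef]; exact hgrow ξ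
    have h1 : |f ξ| * a ^ (2 * q - 1) ≤ (L3 + L4) * (1 + a ^ (3 * q)) :=
      le_trans (mul_le_mul_of_nonneg_right hfb (Real.rpow_nonneg ha0 _)) hmaster
    have h2 : τ * (1 + a ^ (3 * q)) ≤ 2 * (T * s ^ 3) := by nlinarith
    calc |f ξ| * (2 * (τ * q * a ^ (2 * q - 1))) = 2 * q * τ * (|f ξ| * a ^ (2 * q - 1)) := by ring
    _ ≤ 2 * q * τ * ((L3 + L4) * (1 + a ^ (3 * q))) := by
        apply mul_le_mul_of_nonneg_left h1 (by nlinarith)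
    _ = q * (L3 + L4) * (τ * (1 + a ^ (3 * q))) * 2 := by ring
    _ ≤ q * (L3 + L4) * (2 * (T * s ^ 3)) * 2 := by
        apply mul_le_mul_of_nonneg_right (mul_le_mul_of_nonneg_left h2 (by nlinarith)) (by norm_num)
    _ = 2 * q * (L3 + L4) * T * (2 * s ^ 3) := by ring
  -- assemble
  have habs : |deriv f ξ / s - f ξ * (τ * (q * (ξ ^ 2) ^ (q - 1) * (2 * ξ))) / (2 * s ^ 3)|
      ≤ |deriv f ξ| / s + |f ξ| * |τ * (q * (ξ ^ 2) ^ (q - 1) * (2 * ξ))| / (2 * s ^ 3) := by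
    have h1 := abs_sub (deriv f ξ / s) (f ξ * (τ * (q * (ξ ^ 2) ^ (q - 1) * (2 * ξ))) / (2 * s ^ 3))
    have h2 : |deriv f ξ / s| = |deriv f ξ| / s := by
      rw [abs_div, abs_of_pos hs0]
    have h3 : |f ξ * (τ * (q * (ξ ^ 2) ^ (q - 1) * (2 * ξ))) / (2 * s ^ 3)|
        = |f ξ| * |τ * (q * (ξ ^ 2) ^ (q - 1) * (2 * ξ))| / (2 * s ^ 3) := by
      rw [abs_div, abs_mul, abs_of_pos (by nlinarith [pow_pos hs0 3] : (0:ℝ) < 2 * s ^ 3)]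
    rw [h2, h3] at h1
    exact h1
  calc |deriv f ξ / s - f ξ * (τ * (q * (ξ ^ 2) ^ (q - 1) * (2 * ξ))) / (2 * s ^ 3)|
      ≤ |deriv f ξ| / s + |f ξ| * |τ * (q * (ξ ^ 2) ^ (q - 1) * (2 * ξ))| / (2 * s ^ 3) := habs
  _ ≤ 2 * K2 * T + 2 * q * (L3 + L4) * T := add_le_add hterm1 hterm2
  _ = (2 * K2 + 2 * q * (L3 + L4)) * T := by ring
end

section
/- Let q ≥ 1/2 be a real number and let f : ℝ → ℝ satisfy |f(ξ)| ≤ L₃ + L₄·|ξ|^{q+1} for all ξ ∈ ℝ and the local Lipschitz bound |f(ξ) − f(η)| ≤ K·|ξ−η|·(1 + |ξ|^{q} + |η|^{q}) for all ξ, η ∈ ℝ, with positive constants L₃, L₄, K. Then there exists a constant C > 0, depending only on q, L₃, L₄, K, such that for every τ with 0 < τ ≤ 1 and all ξ, η ∈ ℝ, |f_τ(ξ) − f_τ(η)| ≤ C·|ξ−η|·(1 + |ξ|^{q} + |η|^{q}). -/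
open Real

section TamedAux

private lemma rpow_abs_sub_le_tam (p : ℝ) (hp : 1 ≤ p) {a b : ℝ} (ha : 0 ≤ a) (hb : 0 ≤ b) :
    |a ^ p - b ^ p| ≤ p * |a - b| * (a ^ (p - 1) + b ^ (p - 1)) := by
  wlog hba : b ≤ a with H
  · have := H p hp hb ha (le_of_not_ge hba)
    rw [abs_sub_comm b a, abs_sub_comm (b ^ p) (a ^ p)] at this
    linarith [this]
  have hp0 : 0 ≤ p := by linarith
  have hmono : b ^ p ≤ a ^ p := Real.rpow_le_rpow hb hba hp0
  have hkey : a ^ p - b ^ p ≤ p * (a - b) * a ^ (p - 1) := by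
    rcases eq_or_lt_of_le ha with h0 | hapos
    · have ha0 : a = 0 := h0.symm
      have hb0 : b = 0 := le_antisymm (ha0 ▸ hba) hb
      simp [ha0, hb0]
    · have hx : -1 ≤ (b - a) / a := by
        rw [le_div_iff₀ hapos]; linarith
      have bern := one_add_mul_self_le_rpow_one_add hx hp
      have h1 : (1 + (b - a) / a) = b / a := by field_simp; ring
      rw [h1, Real.div_rpow hb hapos.le] at bern
      have hap : (0:ℝ) < a ^ p := Real.rpow_pos_of_pos hapos p
      have hmul : (1 + p * ((b - a) / a)) * a ^ p ≤ b ^ p :=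
        (le_div_iff₀ hap).mp bern
      have haa : a ^ (p - 1) * a = a ^ p := by
        rw [← Real.rpow_add_one hapos.ne' (p - 1)]; ring_nf
      have hexp : p * ((b - a) / a) * a ^ p = p * (b - a) * a ^ (p - 1) := by
        field_simp
        rw [← haa]; ring
      nlinarith [hmul, hexp]
  have hbp : 0 ≤ b ^ (p - 1) := Real.rpow_nonneg hb _
  have habs : |a - b| = a - b := abs_of_nonneg (by linarith)
  have habs2 : |a ^ p - b ^ p| = a ^ p - b ^ p := abs_of_nonneg (by linarith)
  rw [habs, habs2]
  nlinarith [mul_nonneg (mul_nonneg hp0 (sub_nonneg.2 hba)) hbp]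

private lemma core_ineq_tam (L3 L4 τ a b c d B P Q : ℝ)
    (hL3 : 0 < L3) (hL4 : 0 < L4) (hτ : 0 < τ)
    (ha : 0 ≤ a) (hb : 0 ≤ b)
    (hP1 : 1 ≤ P) (hQ1 : 1 ≤ Q)
    (hsa : Real.sqrt τ * a ≤ P) (hsb : Real.sqrt τ * b ≤ Q)
    (hc : τ * c ≤ P ^ 2) (hd : τ * d ≤ Q ^ 2)
    (hBc : B * c ≤ a ^ 2 + b ^ 2) (hBd : B * d = b ^ 2) :
    (L3 + L4 * (B * b)) * (τ * (c + d)) ≤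
      (2 * L3 + 2 * L4) * (1 + a + b) * (P * Q * (P + Q)) := by
  have hs0 : 0 ≤ Real.sqrt τ := Real.sqrt_nonneg τ
  have hss : Real.sqrt τ * Real.sqrt τ = τ := Real.mul_self_sqrt hτ.le
  have hP0 : (0:ℝ) < P := lt_of_lt_of_le one_pos hP1
  have hQ0 : (0:ℝ) < Q := lt_of_lt_of_le one_pos hQ1
  have hD0 : (0:ℝ) < P * Q * (P + Q) := by positivity
  have hPP : P ^ 2 ≤ P * Q * (P + Q) := by
    nlinarith [mul_nonneg (mul_nonneg hP0.le hP0.le) (sub_nonneg.2 hQ1),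
      mul_nonneg (mul_nonneg hP0.le hQ0.le) hQ0.le]
  have hQQ : Q ^ 2 ≤ P * Q * (P + Q) := by
    nlinarith [mul_nonneg (mul_nonneg hP0.le hP0.le) hQ0.le,
      mul_nonneg (mul_nonneg hQ0.le hQ0.le) (sub_nonneg.2 hP1)]
  have hsPQ : (Real.sqrt τ * a) * (Real.sqrt τ * b) ≤ P * Q :=
    mul_le_mul hsa hsb (by positivity) hP0.le
  have E3 : τ * (a ^ 2 * b) ≤ P * Q * (P + Q) * a := by
    have h1 : (Real.sqrt τ * a) * (Real.sqrt τ * b) * a ≤ P * Q * a :=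
      mul_le_mul_of_nonneg_right hsPQ ha
    have h2 : (Real.sqrt τ * a) * (Real.sqrt τ * b) * a
        = (Real.sqrt τ * Real.sqrt τ) * (a ^ 2 * b) := by ring
    rw [hss] at h2
    have h3 : P * Q * a ≤ P * Q * (P + Q) * a := by
      nlinarith [mul_nonneg (mul_nonneg (mul_nonneg hP0.le hQ0.le) ha)
        (show (0:ℝ) ≤ P + Q - 1 by linarith)]
    linarith
  have hsbb : (Real.sqrt τ * b) * (Real.sqrt τ * b) ≤ Q * Q :=
    mul_le_mul hsb hsb (by positivity) hQ0.le
  have E4 : τ * (b ^ 2 * b) ≤ P * Q * (P + Q) * b := by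
    have h1 : (Real.sqrt τ * b) * (Real.sqrt τ * b) * b ≤ Q * Q * b :=
      mul_le_mul_of_nonneg_right hsbb hb
    have h2 : (Real.sqrt τ * b) * (Real.sqrt τ * b) * b
        = (Real.sqrt τ * Real.sqrt τ) * (b ^ 2 * b) := by ring
    rw [hss] at h2
    have h3 : Q * Q * b ≤ P * Q * (P + Q) * b := by
      nlinarith [mul_nonneg (mul_nonneg (mul_nonneg hQ0.le hQ0.le) hb)
        (show (0:ℝ) ≤ P - 1 by linarith),
        mul_nonneg (mul_nonneg (mul_nonneg hP0.le hP0.le) hQ0.le) hb]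
    linarith
  have F3 : b * (τ * (B * c)) ≤ P * Q * (P + Q) * a + P * Q * (P + Q) * b := by
    have g1 : τ * (B * c) ≤ τ * (a ^ 2 + b ^ 2) :=
      mul_le_mul_of_nonneg_left hBc hτ.le
    have g2 : b * (τ * (B * c)) ≤ b * (τ * (a ^ 2 + b ^ 2)) :=
      mul_le_mul_of_nonneg_left g1 hb
    nlinarith [E3, E4]
  have F4 : b * (τ * (B * d)) ≤ P * Q * (P + Q) * b := by
    have h0 : b * (τ * (B * d)) = τ * (b ^ 2 * b) := by rw [hBd]; ring
    linarith [E4]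
  have G1 : L3 * (τ * c) ≤ L3 * (P * Q * (P + Q)) :=
    mul_le_mul_of_nonneg_left (hc.trans hPP) hL3.le
  have G2 : L3 * (τ * d) ≤ L3 * (P * Q * (P + Q)) :=
    mul_le_mul_of_nonneg_left (hd.trans hQQ) hL3.le
  have G3 : L4 * (b * (τ * (B * c))) ≤
      L4 * (P * Q * (P + Q) * a + P * Q * (P + Q) * b) :=
    mul_le_mul_of_nonneg_left F3 hL4.le
  have G4 : L4 * (b * (τ * (B * d))) ≤ L4 * (P * Q * (P + Q) * b) :=
    mul_le_mul_of_nonneg_left F4 hL4.le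
  linarith [G1, G2, G3, G4,
    mul_nonneg (mul_nonneg hL3.le hD0.le) ha,
    mul_nonneg (mul_nonneg hL3.le hD0.le) hb,
    mul_nonneg (mul_nonneg hL4.le hD0.le) ha,
    mul_nonneg (mul_nonneg hL4.le hD0.le) hb,
    mul_nonneg hL4.le hD0.le, mul_nonneg hL3.le hD0.le]

end TamedAux

set_option maxHeartbeats 2000000 in
theorem tamed_drift_local_lipschitz
    (q : ℝ) (hq : 1 / 2 ≤ q) (f : ℝ → ℝ)
    (L3 L4 K : ℝ) (hL3 : 0 < L3) (hL4 : 0 < L4) (hK : 0 < K)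
    (hgrow : ∀ ξ : ℝ, |f ξ| ≤ L3 + L4 * |ξ| ^ (q + 1))
    (hlip : ∀ ξ η : ℝ, |f ξ - f η| ≤ K * |ξ - η| * (1 + |ξ| ^ q + |η| ^ q)) :
    ∃ C : ℝ, 0 < C ∧
      ∀ τ : ℝ, 0 < τ → τ ≤ 1 → ∀ ξ η : ℝ,
        |fTam f q τ ξ - fTam f q τ η| ≤ C * |ξ - η| * (1 + |ξ| ^ q + |η| ^ q) := by
  have hq0 : (0:ℝ) < q := lt_of_lt_of_le (by norm_num) hq
  refine ⟨K + 4 * q * (L3 + L4), by positivity, ?_⟩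
  intro τ hτ0 hτ1 ξ η
  have h2q : (1:ℝ) ≤ 2 * q := by linarith
  have h2q1 : (0:ℝ) ≤ 2 * q - 1 := by linarith
  have hA : (0:ℝ) ≤ |ξ| := abs_nonneg ξ
  have hB : (0:ℝ) ≤ |η| := abs_nonneg η
  have ha : (0:ℝ) ≤ |ξ| ^ q := Real.rpow_nonneg hA q
  have hb : (0:ℝ) ≤ |η| ^ q := Real.rpow_nonneg hB q
  have hc0 : (0:ℝ) ≤ |ξ| ^ (2 * q - 1) := Real.rpow_nonneg hA _
  have hd0 : (0:ℝ) ≤ |η| ^ (2 * q - 1) := Real.rpow_nonneg hB _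
  -- rpow arithmetic helpers
  have hsqA : |ξ| ^ (2 * q) = (|ξ| ^ q) ^ 2 := by
    rw [show (2:ℝ) * q = q * 2 by ring, Real.rpow_mul hA, Real.rpow_two]
  have hsqB : |η| ^ (2 * q) = (|η| ^ q) ^ 2 := by
    rw [show (2:ℝ) * q = q * 2 by ring, Real.rpow_mul hB, Real.rpow_two]
  have hmul2q : ∀ x : ℝ, 0 ≤ x → x * x ^ (2 * q - 1) = x ^ (2 * q) := by
    intro x hx
    rcases hx.eq_or_lt with h0 | hx0
    · rw [← h0, Real.zero_rpow (by positivity : (2:ℝ) * q ≠ 0), zero_mul]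
    · have h1 : x * x ^ (2 * q - 1) = x ^ (1 + (2 * q - 1)) := by
        rw [Real.rpow_add hx0, Real.rpow_one]
      rw [h1]
      congr 1
      ring
  have hpow_split : ∀ x : ℝ, 0 ≤ x → x ^ (q + 1) = x * x ^ q := by
    intro x hx
    rcases hx.eq_or_lt with h0 | hx0
    · rw [← h0, Real.zero_rpow (by positivity : q + 1 ≠ 0), zero_mul]
    · rw [Real.rpow_add hx0, Real.rpow_one]; ring
  -- the taming denominators
  have hP2 : Real.sqrt (1 + τ * |ξ| ^ (2 * q)) ^ 2 = 1 + τ * |ξ| ^ (2 * q) :=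
    Real.sq_sqrt (by positivity)
  have hQ2 : Real.sqrt (1 + τ * |η| ^ (2 * q)) ^ 2 = 1 + τ * |η| ^ (2 * q) :=
    Real.sq_sqrt (by positivity)
  have hP1 : 1 ≤ Real.sqrt (1 + τ * |ξ| ^ (2 * q)) := by
    rw [Real.one_le_sqrt]
    nlinarith [mul_nonneg hτ0.le (Real.rpow_nonneg hA (2 * q))]
  have hQ1 : 1 ≤ Real.sqrt (1 + τ * |η| ^ (2 * q)) := by
    rw [Real.one_le_sqrt]
    nlinarith [mul_nonneg hτ0.le (Real.rpow_nonneg hB (2 * q))]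
  have hP0 : (0:ℝ) < Real.sqrt (1 + τ * |ξ| ^ (2 * q)) := lt_of_lt_of_le one_pos hP1
  have hQ0 : (0:ℝ) < Real.sqrt (1 + τ * |η| ^ (2 * q)) := lt_of_lt_of_le one_pos hQ1
  have hPQ0 : (0:ℝ) < Real.sqrt (1 + τ * |ξ| ^ (2 * q)) + Real.sqrt (1 + τ * |η| ^ (2 * q)) := by
    linarith
  have hsa : Real.sqrt τ * |ξ| ^ q ≤ Real.sqrt (1 + τ * |ξ| ^ (2 * q)) := by
    have h1 : Real.sqrt τ * |ξ| ^ q = Real.sqrt (τ * |ξ| ^ (2 * q)) := by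
      rw [Real.sqrt_mul hτ0.le, hsqA, Real.sqrt_sq ha]
    rw [h1]
    exact Real.sqrt_le_sqrt (by nlinarith [mul_nonneg hτ0.le (Real.rpow_nonneg hA (2 * q))])
  have hsb : Real.sqrt τ * |η| ^ q ≤ Real.sqrt (1 + τ * |η| ^ (2 * q)) := by
    have h1 : Real.sqrt τ * |η| ^ q = Real.sqrt (τ * |η| ^ (2 * q)) := by
      rw [Real.sqrt_mul hτ0.le, hsqB, Real.sqrt_sq hb]
    rw [h1]
    exact Real.sqrt_le_sqrt (by nlinarith [mul_nonneg hτ0.le (Real.rpow_nonneg hB (2 * q))])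
  -- τ * x^{2q-1} ≤ S^2
  have hcle : ∀ x : ℝ, 0 ≤ x → x ^ (2 * q - 1) ≤ 1 + x ^ (2 * q) := by
    intro x hx
    rcases le_total x 1 with h | h
    · have h1 := Real.rpow_le_one hx h h2q1
      have h2 := Real.rpow_nonneg hx (2 * q)
      linarith
    · have h1 := Real.rpow_le_rpow_of_exponent_le h (show 2 * q - 1 ≤ 2 * q by linarith)
      linarith
  have hc : τ * |ξ| ^ (2 * q - 1) ≤ Real.sqrt (1 + τ * |ξ| ^ (2 * q)) ^ 2 := by
    rw [hP2]
    have h1 := mul_le_mul_of_nonneg_left (hcle |ξ| hA) hτ0.le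
    linarith [h1, hτ1]
  have hd : τ * |η| ^ (2 * q - 1) ≤ Real.sqrt (1 + τ * |η| ^ (2 * q)) ^ 2 := by
    rw [hQ2]
    have h1 := mul_le_mul_of_nonneg_left (hcle |η| hB) hτ0.le
    linarith [h1, hτ1]
  -- B*c ≤ a² + b², B*d = b²
  have hBc : |η| * |ξ| ^ (2 * q - 1) ≤ (|ξ| ^ q) ^ 2 + (|η| ^ q) ^ 2 := by
    rcases le_total |η| |ξ| with h | h
    · have h1 : |η| * |ξ| ^ (2 * q - 1) ≤ |ξ| * |ξ| ^ (2 * q - 1) :=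
        mul_le_mul_of_nonneg_right h hc0
      rw [hmul2q |ξ| hA, hsqA] at h1
      linarith [sq_nonneg (|η| ^ q)]
    · have h1 : |ξ| ^ (2 * q - 1) ≤ |η| ^ (2 * q - 1) :=
        Real.rpow_le_rpow hA h h2q1
      have h2 : |η| * |ξ| ^ (2 * q - 1) ≤ |η| * |η| ^ (2 * q - 1) :=
        mul_le_mul_of_nonneg_left h1 hB
      rw [hmul2q |η| hB, hsqB] at h2
      linarith [sq_nonneg (|ξ| ^ q)]
  have hBd : |η| * |η| ^ (2 * q - 1) = (|η| ^ q) ^ 2 := by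
    rw [hmul2q |η| hB, hsqB]
  -- growth with split power
  have hgrow' : |f η| ≤ L3 + L4 * (|η| * |η| ^ q) := by
    have := hgrow η
    rwa [hpow_split |η| hB] at this
  -- difference of square roots
  have hQP : |Real.sqrt (1 + τ * |η| ^ (2 * q)) - Real.sqrt (1 + τ * |ξ| ^ (2 * q))| *
      (Real.sqrt (1 + τ * |ξ| ^ (2 * q)) + Real.sqrt (1 + τ * |η| ^ (2 * q)))
      = τ * |(|η| ^ (2 * q) - |ξ| ^ (2 * q))| := by
    rw [← abs_of_pos hPQ0, ← abs_mul]
    have h1 : (Real.sqrt (1 + τ * |η| ^ (2 * q)) - Real.sqrt (1 + τ * |ξ| ^ (2 * q))) *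
        (Real.sqrt (1 + τ * |ξ| ^ (2 * q)) + Real.sqrt (1 + τ * |η| ^ (2 * q)))
        = Real.sqrt (1 + τ * |η| ^ (2 * q)) ^ 2 - Real.sqrt (1 + τ * |ξ| ^ (2 * q)) ^ 2 := by
      ring
    rw [h1, hP2, hQ2,
      show (1 + τ * |η| ^ (2 * q)) - (1 + τ * |ξ| ^ (2 * q))
        = τ * (|η| ^ (2 * q) - |ξ| ^ (2 * q)) by ring,
      abs_mul, abs_of_pos hτ0]
  have hABle : |(|η| - |ξ|)| ≤ |ξ - η| := by
    have h1 := abs_abs_sub_abs_le_abs_sub η ξ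
    rwa [abs_sub_comm η ξ] at h1
  have hpowdiff : |(|η| ^ (2 * q) - |ξ| ^ (2 * q))| ≤
      2 * q * |ξ - η| * (|ξ| ^ (2 * q - 1) + |η| ^ (2 * q - 1)) := by
    have h1 := rpow_abs_sub_le_tam (2 * q) h2q hB hA
    have h2 : 2 * q * |(|η| - |ξ|)| * (|η| ^ (2 * q - 1) + |ξ| ^ (2 * q - 1)) ≤
        2 * q * |ξ - η| * (|η| ^ (2 * q - 1) + |ξ| ^ (2 * q - 1)) := by
      apply mul_le_mul_of_nonneg_right _ (by positivity)
      exact mul_le_mul_of_nonneg_left hABle (by linarith)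
    linarith
  have hQPle : |Real.sqrt (1 + τ * |η| ^ (2 * q)) - Real.sqrt (1 + τ * |ξ| ^ (2 * q))| *
      (Real.sqrt (1 + τ * |ξ| ^ (2 * q)) + Real.sqrt (1 + τ * |η| ^ (2 * q)))
      ≤ τ * (2 * q * |ξ - η| * (|ξ| ^ (2 * q - 1) + |η| ^ (2 * q - 1))) := by
    rw [hQP]
    exact mul_le_mul_of_nonneg_left hpowdiff hτ0.le
  -- main splitting
  show |f ξ / Real.sqrt (1 + τ * |ξ| ^ (2 * q)) - f η / Real.sqrt (1 + τ * |η| ^ (2 * q))|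
      ≤ (K + 4 * q * (L3 + L4)) * |ξ - η| * (1 + |ξ| ^ q + |η| ^ q)
  have hsplit : f ξ / Real.sqrt (1 + τ * |ξ| ^ (2 * q)) - f η / Real.sqrt (1 + τ * |η| ^ (2 * q))
      = (f ξ - f η) / Real.sqrt (1 + τ * |ξ| ^ (2 * q))
        + f η * (Real.sqrt (1 + τ * |η| ^ (2 * q)) - Real.sqrt (1 + τ * |ξ| ^ (2 * q)))
          / (Real.sqrt (1 + τ * |ξ| ^ (2 * q)) * Real.sqrt (1 + τ * |η| ^ (2 * q))) := by
    field_simp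
    ring
  rw [hsplit]
  have hT1 : |f ξ - f η| / Real.sqrt (1 + τ * |ξ| ^ (2 * q))
      ≤ K * |ξ - η| * (1 + |ξ| ^ q + |η| ^ q) :=
    (div_le_self (abs_nonneg _) hP1).trans (hlip ξ η)
  have hT2 : |f η| * |Real.sqrt (1 + τ * |η| ^ (2 * q)) - Real.sqrt (1 + τ * |ξ| ^ (2 * q))|
      / (Real.sqrt (1 + τ * |ξ| ^ (2 * q)) * Real.sqrt (1 + τ * |η| ^ (2 * q)))
      ≤ 4 * q * (L3 + L4) * |ξ - η| * (1 + |ξ| ^ q + |η| ^ q) := by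
    rw [div_le_iff₀ (mul_pos hP0 hQ0)]
    have h5 : |f η| * |Real.sqrt (1 + τ * |η| ^ (2 * q)) - Real.sqrt (1 + τ * |ξ| ^ (2 * q))| *
        (Real.sqrt (1 + τ * |ξ| ^ (2 * q)) + Real.sqrt (1 + τ * |η| ^ (2 * q)))
        ≤ (2 * q * |ξ - η|) * ((L3 + L4 * (|η| * |η| ^ q)) *
            (τ * (|ξ| ^ (2 * q - 1) + |η| ^ (2 * q - 1)))) := by
      have step : |f η| * (|Real.sqrt (1 + τ * |η| ^ (2 * q)) - Real.sqrt (1 + τ * |ξ| ^ (2 * q))| *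
          (Real.sqrt (1 + τ * |ξ| ^ (2 * q)) + Real.sqrt (1 + τ * |η| ^ (2 * q))))
          ≤ (L3 + L4 * (|η| * |η| ^ q)) *
            (τ * (2 * q * |ξ - η| * (|ξ| ^ (2 * q - 1) + |η| ^ (2 * q - 1)))) :=
        mul_le_mul hgrow' hQPle
          (mul_nonneg (abs_nonneg _) hPQ0.le)
          (by positivity)
      linarith [step]
    have hcore := core_ineq_tam L3 L4 τ (|ξ| ^ q) (|η| ^ q) (|ξ| ^ (2 * q - 1))
      (|η| ^ (2 * q - 1)) (|η|) (Real.sqrt (1 + τ * |ξ| ^ (2 * q)))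
      (Real.sqrt (1 + τ * |η| ^ (2 * q))) hL3 hL4 hτ0 ha hb hP1 hQ1 hsa hsb hc hd hBc hBd
    have h6 : |f η| * |Real.sqrt (1 + τ * |η| ^ (2 * q)) - Real.sqrt (1 + τ * |ξ| ^ (2 * q))| *
        (Real.sqrt (1 + τ * |ξ| ^ (2 * q)) + Real.sqrt (1 + τ * |η| ^ (2 * q)))
        ≤ (2 * q * |ξ - η|) * ((2 * L3 + 2 * L4) * (1 + |ξ| ^ q + |η| ^ q) *
            (Real.sqrt (1 + τ * |ξ| ^ (2 * q)) * Real.sqrt (1 + τ * |η| ^ (2 * q)) *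
              (Real.sqrt (1 + τ * |ξ| ^ (2 * q)) + Real.sqrt (1 + τ * |η| ^ (2 * q)))))
        := h5.trans (mul_le_mul_of_nonneg_left hcore (by positivity))
    have h7 : (2 * q * |ξ - η|) * ((2 * L3 + 2 * L4) * (1 + |ξ| ^ q + |η| ^ q) *
        (Real.sqrt (1 + τ * |ξ| ^ (2 * q)) * Real.sqrt (1 + τ * |η| ^ (2 * q)) *
          (Real.sqrt (1 + τ * |ξ| ^ (2 * q)) + Real.sqrt (1 + τ * |η| ^ (2 * q)))))
        = (4 * q * (L3 + L4) * |ξ - η| * (1 + |ξ| ^ q + |η| ^ q) *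
            (Real.sqrt (1 + τ * |ξ| ^ (2 * q)) * Real.sqrt (1 + τ * |η| ^ (2 * q)))) *
          (Real.sqrt (1 + τ * |ξ| ^ (2 * q)) + Real.sqrt (1 + τ * |η| ^ (2 * q))) := by
      ring
    refine le_of_mul_le_mul_right ?_ hPQ0
    calc |f η| * |Real.sqrt (1 + τ * |η| ^ (2 * q)) - Real.sqrt (1 + τ * |ξ| ^ (2 * q))| *
          (Real.sqrt (1 + τ * |ξ| ^ (2 * q)) + Real.sqrt (1 + τ * |η| ^ (2 * q)))
        ≤ _ := h6
      _ = _ := h7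
  calc |(f ξ - f η) / Real.sqrt (1 + τ * |ξ| ^ (2 * q))
        + f η * (Real.sqrt (1 + τ * |η| ^ (2 * q)) - Real.sqrt (1 + τ * |ξ| ^ (2 * q)))
          / (Real.sqrt (1 + τ * |ξ| ^ (2 * q)) * Real.sqrt (1 + τ * |η| ^ (2 * q)))|
      ≤ |(f ξ - f η) / Real.sqrt (1 + τ * |ξ| ^ (2 * q))|
        + |f η * (Real.sqrt (1 + τ * |η| ^ (2 * q)) - Real.sqrt (1 + τ * |ξ| ^ (2 * q)))
          / (Real.sqrt (1 + τ * |ξ| ^ (2 * q)) * Real.sqrt (1 + τ * |η| ^ (2 * q)))| :=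
        abs_add_le _ _
    _ = |f ξ - f η| / Real.sqrt (1 + τ * |ξ| ^ (2 * q))
        + |f η| * |Real.sqrt (1 + τ * |η| ^ (2 * q)) - Real.sqrt (1 + τ * |ξ| ^ (2 * q))|
          / (Real.sqrt (1 + τ * |ξ| ^ (2 * q)) * Real.sqrt (1 + τ * |η| ^ (2 * q))) := by
        rw [abs_div, abs_div, abs_mul, abs_of_pos hP0, abs_of_pos (mul_pos hP0 hQ0)]
    _ ≤ (K + 4 * q * (L3 + L4)) * |ξ - η| * (1 + |ξ| ^ q + |η| ^ q) := by
        linarith [hT1, hT2]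
end

section
/- Let q > 0 and f : ℝ → ℝ. Then for every τ > 0 and every ξ ∈ ℝ, |f(ξ) − f_τ(ξ)| ≤ min{ (1/2)·τ·|ξ|^{2q}·|f(ξ)|, (√2/2)·τ^{1/2}·|ξ|^{q}·|f(ξ)| }. -/
open Real

theorem taming_error_pointwise
    (q : ℝ) (hq : 0 < q) (f : ℝ → ℝ) :
    ∀ τ : ℝ, 0 < τ → ∀ ξ : ℝ,
      |f ξ - fTam f q τ ξ| ≤
        min ((1 / 2) * τ * |ξ| ^ (2 * q) * |f ξ|)
          ((Real.sqrt 2 / 2) * Real.sqrt τ * |ξ| ^ q * |f ξ|) := by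
  intro τ hτ ξ
  set x := τ * |ξ| ^ (2 * q) with hxdef
  have hx : 0 ≤ x := mul_nonneg hτ.le (Real.rpow_nonneg (abs_nonneg ξ) _)
  set s := Real.sqrt (1 + x) with hsdef
  have hs2 : s ^ 2 = 1 + x := Real.sq_sqrt (by linarith)
  have hsn : 0 ≤ s := Real.sqrt_nonneg _
  have hs1 : 1 ≤ s := by nlinarith
  have hs0 : 0 < s := lt_of_lt_of_le one_pos hs1
  set t := Real.sqrt x with htdef
  have ht0 : 0 ≤ t := Real.sqrt_nonneg x
  have ht2 : t ^ 2 = x := Real.sq_sqrt hx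
  have hts : t ≤ s := by nlinarith
  have h2 : (Real.sqrt 2) ^ 2 = 2 := Real.sq_sqrt (by norm_num)
  have h2n : (0:ℝ) < Real.sqrt 2 := Real.sqrt_pos.mpr (by norm_num)
  have h2le : Real.sqrt 2 ≤ 2 := by nlinarith
  -- rewrite the error
  have key : |f ξ - fTam f q τ ξ| = |f ξ| * ((s - 1) / s) := by
    have : f ξ - fTam f q τ ξ = f ξ * ((s - 1) / s) := by
      rw [fTam]
      field_simp
      ring
    rw [this, abs_mul, abs_of_nonneg (div_nonneg (by linarith) hs0.le)]
  have hb1 : (s - 1) / s ≤ x / 2 := by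
    rw [div_le_iff₀ hs0]
    nlinarith [sq_nonneg (s - 1)]
  have hb2 : (s - 1) / s ≤ t / Real.sqrt 2 := by
    rw [div_le_div_iff₀ hs0 h2n]
    -- (s-1)*√2 ≤ t*s ; multiply by (s+1)
    have h3 : Real.sqrt 2 * t ^ 2 ≤ t * s * (s + 1) := by
      nlinarith [mul_nonneg ht0 (sub_nonneg.2 hts)]
    have h4 : (s - 1) * (s + 1) = t ^ 2 := by nlinarith
    have hsp1 : (0:ℝ) < s + 1 := by linarith
    nlinarith
  -- identify the two bounds with the min arguments
  have ht_eq : t = Real.sqrt τ * |ξ| ^ q := by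
    rw [htdef, hxdef, Real.sqrt_mul hτ.le]
    congr 1
    have : |ξ| ^ (2 * q) = (|ξ| ^ q) ^ 2 := by
      rw [← Real.rpow_natCast (|ξ| ^ q) 2, ← Real.rpow_mul (abs_nonneg ξ)]
      norm_num
      ring_nf
    rw [this, Real.sqrt_sq (Real.rpow_nonneg (abs_nonneg ξ) q)]
  rw [key]
  refine le_min ?_ ?_
  · calc |f ξ| * ((s - 1) / s) ≤ |f ξ| * (x / 2) :=
        mul_le_mul_of_nonneg_left hb1 (abs_nonneg _)
      _ = (1 / 2) * τ * |ξ| ^ (2 * q) * |f ξ| := by rw [hxdef]; ring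
  · calc |f ξ| * ((s - 1) / s) ≤ |f ξ| * (t / Real.sqrt 2) :=
        mul_le_mul_of_nonneg_left hb2 (abs_nonneg _)
      _ = (Real.sqrt 2 / 2) * Real.sqrt τ * |ξ| ^ q * |f ξ| := by
        rw [ht_eq]
        rw [div_eq_mul_inv, div_eq_mul_inv]
        have : (Real.sqrt 2)⁻¹ = Real.sqrt 2 * 2⁻¹ := by
          field_simp
          exact h2.symm
        rw [this]
        ring
end

section
/- Let q > 0 and let f : ℝ → ℝ satisfy |f(ξ)| ≤ L₃ + L₄·|ξ|^{q+1} for all ξ ∈ ℝ, with positive constants L₃, L₄. Then there exists a constant C > 0, depending only on q, L₃, L₄, such that for every τ > 0 and every ξ ∈ ℝ both |f(ξ) − f_τ(ξ)| ≤ C·τ·(1 + |ξ|^{3q+1}) and |f(ξ) − f_τ(ξ)| ≤ C·τ^{1/2}·(1 + |ξ|^{2q+1}) hold. -/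
open Real

lemma rpow_le_one_add_rpow {a p r : ℝ} (ha : 0 ≤ a) (hp : 0 ≤ p) (hpr : p ≤ r) :
    a ^ p ≤ 1 + a ^ r := by
  rcases le_or_gt a 1 with h | h
  · have h1 : a ^ p ≤ 1 := Real.rpow_le_one ha h hp
    have h2 : 0 ≤ a ^ r := Real.rpow_nonneg ha r
    linarith
  · have h1 : a ^ p ≤ a ^ r := Real.rpow_le_rpow_of_exponent_le h.le hpr
    have h2 : 0 ≤ a ^ r := Real.rpow_nonneg ha r
    linarith

set_option maxHeartbeats 1000000 in
theorem taming_error_polynomial_bounds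
    (q : ℝ) (hq : 0 < q) (f : ℝ → ℝ) (L3 L4 : ℝ) (hL3 : 0 < L3) (hL4 : 0 < L4)
    (hgrow : ∀ ξ : ℝ, |f ξ| ≤ L3 + L4 * |ξ| ^ (q + 1)) :
    ∃ C : ℝ, 0 < C ∧
      ∀ τ : ℝ, 0 < τ → ∀ ξ : ℝ,
        |f ξ - fTam f q τ ξ| ≤ C * τ * (1 + |ξ| ^ (3 * q + 1)) ∧
        |f ξ - fTam f q τ ξ| ≤ C * Real.sqrt τ * (1 + |ξ| ^ (2 * q + 1)) := by
  refine ⟨L3 + L4, by positivity, ?_⟩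
  intro τ hτ ξ
  have ha0 : 0 ≤ |ξ| := abs_nonneg ξ
  set a := |ξ| with ha
  have hx0 : 0 ≤ τ * a ^ (2 * q) := by positivity
  set x := τ * a ^ (2 * q) with hx
  have h1x : (0:ℝ) < 1 + x := by linarith
  have hs2 : Real.sqrt (1 + x) ^ 2 = 1 + x := Real.sq_sqrt h1x.le
  set s := Real.sqrt (1 + x) with hs
  have hsn : 0 ≤ s := Real.sqrt_nonneg _
  have hs1 : 1 ≤ s := by nlinarith
  have hs0 : (0:ℝ) < s := by linarith
  have key : f ξ - fTam f q τ ξ = f ξ * ((s - 1) / s) := by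
    show f ξ - f ξ / s = _
    field_simp
  have hfrac : 0 ≤ (s - 1) / s := div_nonneg (by linarith) hsn
  have habs : |f ξ - fTam f q τ ξ| ≤ |f ξ| * (s - 1) := by
    rw [key, abs_mul, abs_of_nonneg hfrac]
    have h1 : (s - 1) / s ≤ s - 1 := div_le_self (by linarith) hs1
    exact mul_le_mul_of_nonneg_left h1 (abs_nonneg _)
  have hA : s - 1 ≤ x := by nlinarith
  have hsxq : Real.sqrt x ^ 2 = x := Real.sq_sqrt hx0
  have hB : s - 1 ≤ Real.sqrt x := by nlinarith [Real.sqrt_nonneg x]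
  have hf : |f ξ| ≤ L3 + L4 * a ^ (q + 1) := hgrow ξ
  have hfn : 0 ≤ |f ξ| := abs_nonneg _
  have hs1' : 0 ≤ s - 1 := by linarith
  have hmul1 : a ^ (q + 1) * a ^ (2 * q) = a ^ (3 * q + 1) := by
    rw [← Real.rpow_add' ha0 (show (q + 1) + 2 * q ≠ 0 from ne_of_gt (by linarith))]
    congr 1; ring
  have hmul2 : a ^ (q + 1) * a ^ q = a ^ (2 * q + 1) := by
    rw [← Real.rpow_add' ha0 (show (q + 1) + q ≠ 0 from ne_of_gt (by linarith))]
    congr 1; ring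
  have hsx : Real.sqrt x = Real.sqrt τ * a ^ q := by
    rw [hx, Real.sqrt_mul hτ.le]
    congr 1
    have h2 : a ^ (2 * q) = a ^ q * a ^ q := by
      rw [← Real.rpow_add' ha0 (show q + q ≠ 0 from ne_of_gt (by linarith))]
      congr 1; ring
    rw [h2, Real.sqrt_mul_self (Real.rpow_nonneg ha0 q)]
  have h2q : a ^ (2 * q) ≤ 1 + a ^ (3 * q + 1) :=
    rpow_le_one_add_rpow ha0 (by linarith) (by linarith)
  have hqq : a ^ q ≤ 1 + a ^ (2 * q + 1) :=
    rpow_le_one_add_rpow ha0 (by linarith) (by linarith)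
  constructor
  · have t1 : |f ξ| * (s - 1) ≤ (L3 + L4 * a ^ (q + 1)) * x :=
      mul_le_mul hf hA hs1' (by positivity)
    have t2 : (L3 + L4 * a ^ (q + 1)) * x ≤ (L3 + L4) * τ * (1 + a ^ (3 * q + 1)) := by
      rw [hx]
      have expand : (L3 + L4 * a ^ (q + 1)) * (τ * a ^ (2 * q))
          = τ * (L3 * a ^ (2 * q) + L4 * (a ^ (q + 1) * a ^ (2 * q))) := by ring
      rw [expand, hmul1]
      have k1 : τ * (L3 * a ^ (2 * q)) ≤ τ * (L3 * (1 + a ^ (3 * q + 1))) :=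
        mul_le_mul_of_nonneg_left (mul_le_mul_of_nonneg_left h2q hL3.le) hτ.le
      have k2 : 0 ≤ τ * L4 := mul_nonneg hτ.le hL4.le
      nlinarith [k1, k2]
    linarith
  · have t1 : |f ξ| * (s - 1) ≤ (L3 + L4 * a ^ (q + 1)) * Real.sqrt x :=
      mul_le_mul hf hB hs1' (by positivity)
    have t2 : (L3 + L4 * a ^ (q + 1)) * Real.sqrt x
        ≤ (L3 + L4) * Real.sqrt τ * (1 + a ^ (2 * q + 1)) := by
      rw [hsx]
      have expand : (L3 + L4 * a ^ (q + 1)) * (Real.sqrt τ * a ^ q)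
          = Real.sqrt τ * (L3 * a ^ q + L4 * (a ^ (q + 1) * a ^ q)) := by ring
      rw [expand, hmul2]
      have hst : 0 ≤ Real.sqrt τ := Real.sqrt_nonneg τ
      have k1 : Real.sqrt τ * (L3 * a ^ q) ≤ Real.sqrt τ * (L3 * (1 + a ^ (2 * q + 1))) :=
        mul_le_mul_of_nonneg_left (mul_le_mul_of_nonneg_left hqq hL3.le) hst
      have k2 : 0 ≤ Real.sqrt τ * L4 := mul_nonneg hst hL4.le
      nlinarith [k1, k2]
    linarith
end

section
/- Let (O, 𝒜, μ) be a measure space with μ(O) < ∞, let q > 0, and let f : ℝ → ℝ be a measurable function with |f(ξ)| ≤ L₃ + L₄·|ξ|^{q+1} for all ξ ∈ ℝ, where L₃, L₄ > 0. Then there exists a constant C > 0, depending only on q, L₃, L₄, such that for every τ > 0 and every measurable u : O → ℝ with ∫ |u|^{2(3q+1)} dμ < ∞, the function f∘u − f_τ∘u is in L²(μ) and (∫ |f(u(x)) − f_τ(u(x))|² dμ(x))^{1/2} ≤ C·τ·( μ(O)^{1/2} + (∫ |u(x)|^{2(3q+1)} dμ(x))^{1/2} ). -/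
open Real MeasureTheory
open scoped ENNReal

lemma sqrt_add_le' (a b : ℝ) (ha : 0 ≤ a) (hb : 0 ≤ b) :
    Real.sqrt (a + b) ≤ Real.sqrt a + Real.sqrt b := by
  rw [← Real.sqrt_sq (by positivity : (0:ℝ) ≤ Real.sqrt a + Real.sqrt b)]
  apply Real.sqrt_le_sqrt
  nlinarith [Real.sq_sqrt ha, Real.sq_sqrt hb, Real.sqrt_nonneg a, Real.sqrt_nonneg b]

lemma taming_ptwise (q τ : ℝ) (hq : 0 < q) (hτ : 0 < τ) (f : ℝ → ℝ)
    (L3 L4 : ℝ) (hL3 : 0 < L3) (hL4 : 0 < L4)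
    (hgrow : ∀ ξ : ℝ, |f ξ| ≤ L3 + L4 * |ξ| ^ (q + 1)) (ξ : ℝ) :
    (f ξ - fTam f q τ ξ) ^ 2 ≤
      2 * (L3 ^ 2 + L4 ^ 2) * τ ^ 2 * (1 + |ξ| ^ (2 * (3 * q + 1))) := by
  set a : ℝ := τ * |ξ| ^ (2 * q) with ha_def
  have hapos : 0 ≤ a := by positivity
  set s : ℝ := Real.sqrt (1 + a) with hs_def
  have hs1 : 1 ≤ s := Real.one_le_sqrt.mpr (by linarith)
  have hs0 : 0 < s := by linarith
  have hs_le : s ≤ 1 + a := by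
    have h1 : s ^ 2 = 1 + a := Real.sq_sqrt (by linarith)
    nlinarith
  -- |f ξ - fTam f q τ ξ| ≤ |f ξ| * a
  have key : |f ξ - fTam f q τ ξ| ≤ |f ξ| * a := by
    have : f ξ - fTam f q τ ξ = f ξ * ((s - 1) / s) := by
      unfold fTam
      rw [← hs_def]
      field_simp
    rw [this, abs_mul]
    have h1 : |(s - 1) / s| = (s - 1) / s := abs_of_nonneg (div_nonneg (by linarith) hs0.le)
    rw [h1]
    have h2 : (s - 1) / s ≤ a := by
      rw [div_le_iff₀ hs0]
      nlinarith
    exact mul_le_mul_of_nonneg_left h2 (abs_nonneg _)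
  -- combine with the growth bound
  have key2 : |f ξ - fTam f q τ ξ| ≤ τ * (L3 * |ξ| ^ (2 * q) + L4 * |ξ| ^ (3 * q + 1)) := by
    have h1 : |f ξ| * a ≤ (L3 + L4 * |ξ| ^ (q + 1)) * a :=
      mul_le_mul_of_nonneg_right (hgrow ξ) hapos
    have h2 : |ξ| ^ (q + 1) * |ξ| ^ (2 * q) = |ξ| ^ (3 * q + 1) := by
      rw [← Real.rpow_add' (abs_nonneg ξ) (by linarith : (q + 1) + 2 * q ≠ 0)]
      ring_nf
    calc |f ξ - fTam f q τ ξ| ≤ |f ξ| * a := key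
      _ ≤ (L3 + L4 * |ξ| ^ (q + 1)) * a := h1
      _ = τ * (L3 * |ξ| ^ (2 * q) + L4 * (|ξ| ^ (q + 1) * |ξ| ^ (2 * q))) := by
          rw [ha_def]; ring
      _ = τ * (L3 * |ξ| ^ (2 * q) + L4 * |ξ| ^ (3 * q + 1)) := by rw [h2]
  -- square and estimate
  have h4q : (|ξ| ^ (2 * q)) ^ 2 = |ξ| ^ (4 * q) := by
    rw [← Real.rpow_natCast (|ξ| ^ (2 * q)) 2, ← Real.rpow_mul (abs_nonneg ξ)]
    norm_num
    ring_nf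
  have h6q : (|ξ| ^ (3 * q + 1)) ^ 2 = |ξ| ^ (2 * (3 * q + 1)) := by
    rw [← Real.rpow_natCast (|ξ| ^ (3 * q + 1)) 2, ← Real.rpow_mul (abs_nonneg ξ)]
    norm_num; ring_nf
  have hcomp : |ξ| ^ (4 * q) ≤ 1 + |ξ| ^ (2 * (3 * q + 1)) := by
    rcases le_or_gt |ξ| 1 with h | h
    · have := Real.rpow_le_one (abs_nonneg ξ) h (by linarith : (0:ℝ) ≤ 4 * q)
      have h2 : 0 ≤ |ξ| ^ (2 * (3 * q + 1)) := Real.rpow_nonneg (abs_nonneg ξ) _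
      linarith
    · have := Real.rpow_le_rpow_of_exponent_le h.le
        (by linarith : 4 * q ≤ 2 * (3 * q + 1))
      linarith
  have habs : (f ξ - fTam f q τ ξ) ^ 2 ≤
      (τ * (L3 * |ξ| ^ (2 * q) + L4 * |ξ| ^ (3 * q + 1))) ^ 2 := by
    have h0 : 0 ≤ |f ξ - fTam f q τ ξ| := abs_nonneg _
    nlinarith [sq_abs (f ξ - fTam f q τ ξ), key2]
  have hA : 0 ≤ |ξ| ^ (2 * q) := Real.rpow_nonneg (abs_nonneg ξ) _
  have hB : 0 ≤ |ξ| ^ (3 * q + 1) := Real.rpow_nonneg (abs_nonneg ξ) _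
  set A : ℝ := |ξ| ^ (2 * q)
  set B : ℝ := |ξ| ^ (3 * q + 1)
  set X : ℝ := |ξ| ^ (2 * (3 * q + 1))
  have hX0 : 0 ≤ X := Real.rpow_nonneg (abs_nonneg ξ) _
  have e1 : (L3 * A + L4 * B) ^ 2 ≤ 2 * (L3 ^ 2 * A ^ 2 + L4 ^ 2 * B ^ 2) := by
    nlinarith [sq_nonneg (L3 * A - L4 * B)]
  calc (f ξ - fTam f q τ ξ) ^ 2
      ≤ τ ^ 2 * (L3 * A + L4 * B) ^ 2 := by rw [mul_pow] at habs; exact habs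
    _ ≤ τ ^ 2 * (2 * (L3 ^ 2 * A ^ 2 + L4 ^ 2 * B ^ 2)) :=
        mul_le_mul_of_nonneg_left e1 (sq_nonneg τ)
    _ = τ ^ 2 * (2 * (L3 ^ 2 * (|ξ| ^ (4 * q)) + L4 ^ 2 * X)) := by rw [h4q, h6q]
    _ ≤ τ ^ 2 * (2 * (L3 ^ 2 * (1 + X) + L4 ^ 2 * (1 + X))) := by
        apply mul_le_mul_of_nonneg_left _ (sq_nonneg τ)
        nlinarith [hcomp, hX0, sq_nonneg L3, sq_nonneg L4]
    _ = 2 * (L3 ^ 2 + L4 ^ 2) * τ ^ 2 * (1 + X) := by ring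

theorem taming_error_L2
    {O : Type*} [MeasurableSpace O] (μ : Measure O) (hμ : μ Set.univ < ⊤)
    (q : ℝ) (hq : 0 < q) (f : ℝ → ℝ) (hfm : Measurable f)
    (L3 L4 : ℝ) (hL3 : 0 < L3) (hL4 : 0 < L4)
    (hgrow : ∀ ξ : ℝ, |f ξ| ≤ L3 + L4 * |ξ| ^ (q + 1)) :
    ∃ C : ℝ, 0 < C ∧
      ∀ τ : ℝ, 0 < τ →
        ∀ u : O → ℝ, Measurable u →
          Integrable (fun x => |u x| ^ (2 * (3 * q + 1))) μ →
          MemLp (fun x => f (u x) - fTam f q τ (u x)) 2 μ ∧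
          Real.sqrt (∫ x, (f (u x) - fTam f q τ (u x)) ^ 2 ∂μ) ≤
            C * τ * (Real.sqrt (μ Set.univ).toReal +
              Real.sqrt (∫ x, |u x| ^ (2 * (3 * q + 1)) ∂μ)) := by
  haveI : IsFiniteMeasure μ := ⟨hμ⟩
  set K : ℝ := 2 * (L3 ^ 2 + L4 ^ 2) with hK_def
  have hK : 0 < K := by positivity
  refine ⟨Real.sqrt K, Real.sqrt_pos.mpr hK, ?_⟩
  intro τ hτ u hu hInt
  -- measurability
  have hfTam : Measurable (fTam f q τ) := by
    unfold fTam
    exact hfm.div ((measurable_const.add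
      (measurable_const.mul ((measurable_abs).pow_const (2 * q)))).sqrt)
  have hmeas : Measurable (fun x => f (u x) - fTam f q τ (u x)) :=
    (hfm.comp hu).sub (hfTam.comp hu)
  -- dominating function
  have hdom : Integrable (fun x => K * τ ^ 2 * (1 + |u x| ^ (2 * (3 * q + 1)))) μ :=
    ((integrable_const 1).add hInt).const_mul _
  have hbound : ∀ x, (f (u x) - fTam f q τ (u x)) ^ 2 ≤
      K * τ ^ 2 * (1 + |u x| ^ (2 * (3 * q + 1))) := fun x =>
    taming_ptwise q τ hq hτ f L3 L4 hL3 hL4 hgrow (u x)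
  have hsq : Integrable (fun x => (f (u x) - fTam f q τ (u x)) ^ 2) μ := by
    refine hdom.mono' ((hmeas.pow_const 2).aestronglyMeasurable) ?_
    filter_upwards with x
    rw [Real.norm_eq_abs, abs_of_nonneg (sq_nonneg _)]
    exact hbound x
  have hmem : MemLp (fun x => f (u x) - fTam f q τ (u x)) 2 μ :=
    (memLp_two_iff_integrable_sq hmeas.aestronglyMeasurable).mpr hsq
  refine ⟨hmem, ?_⟩
  set M : ℝ := (μ Set.univ).toReal with hM_def
  set I : ℝ := ∫ x, |u x| ^ (2 * (3 * q + 1)) ∂μ with hI_def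
  have hM0 : 0 ≤ M := ENNReal.toReal_nonneg
  have hI0 : 0 ≤ I := integral_nonneg fun x => Real.rpow_nonneg (abs_nonneg _) _
  have hint_le : (∫ x, (f (u x) - fTam f q τ (u x)) ^ 2 ∂μ) ≤ K * τ ^ 2 * (M + I) := by
    calc (∫ x, (f (u x) - fTam f q τ (u x)) ^ 2 ∂μ)
        ≤ ∫ x, K * τ ^ 2 * (1 + |u x| ^ (2 * (3 * q + 1))) ∂μ :=
          integral_mono hsq hdom hbound
      _ = K * τ ^ 2 * (M + I) := by
          rw [integral_const_mul, integral_add (integrable_const 1) hInt,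
            integral_const, smul_eq_mul, mul_one, Measure.real]
  calc Real.sqrt (∫ x, (f (u x) - fTam f q τ (u x)) ^ 2 ∂μ)
      ≤ Real.sqrt (K * τ ^ 2 * (M + I)) := Real.sqrt_le_sqrt hint_le
    _ = Real.sqrt K * τ * Real.sqrt (M + I) := by
        rw [Real.sqrt_mul (by positivity), Real.sqrt_mul hK.le,
          Real.sqrt_sq hτ.le]
    _ ≤ Real.sqrt K * τ * (Real.sqrt M + Real.sqrt I) := by
        have := sqrt_add_le' M I hM0 hI0
        have h0 : 0 ≤ Real.sqrt K * τ := by positivity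
        exact mul_le_mul_of_nonneg_left this h0
end

section
/- Let k ≥ 1 be a natural number, set q = 2k, and let f(ξ) = Σ_{i=0}^{2k+1} a_i ξ^i be a real polynomial with a_{2k+1} < 0. Then there exists a constant K₃ > 0 such that for every τ with 0 < τ ≤ 1 and every ξ ∈ ℝ, (1 − τ·ξ^{2q})·f'(ξ) + 2q·τ·ξ^{2q−1}·f(ξ) ≤ K₃·(1 + τ·ξ^{2q})^{3/2}, where f' is the derivative of f. -/
/-!
Write `n = 2k+1` for the degree of `f` and `c < 0` for its leading coefficient.
Since `ξ^{2q} = ξ · ξ^{2q-1}`, the left-hand side equals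
`f'(ξ) + τ · ξ^{2q-1} (2q f(ξ) - ξ f'(ξ))`. Both `f'` and `ξ^{2q-1} (2q f - ξ f')` are
polynomials of even degree (`n - 1` and `2q - 1 + n`) with negative leading coefficients `n c`
and `(2q - n) c`, so both are bounded above on `ℝ`. As `0 < τ ≤ 1`, the left-hand side is
bounded uniformly, while the right-hand side is at least `K₃`.
-/

open Polynomial Filter Finset

namespace Polynomial

theorem natDegree_sum_range_C_mul_X_pow {R : Type*} [Semiring R] {a : ℕ → R} {n : ℕ}
    (ha : a n ≠ 0) : (∑ i ∈ range (n + 1), C (a i) * X ^ i).natDegree = n := by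
  refine natDegree_eq_of_le_of_coeff_ne_zero ?_ (by simpa using ha)
  rw [natDegree_le_iff_coeff_eq_zero]
  intro j hj
  simp only [finsetSum_coeff, coeff_C_mul_X_pow]
  exact sum_eq_zero fun i hi => if_neg (by grind)

theorem coeff_C_mul_sub_X_mul_derivative {R : Type*} [CommRing R] (p : R[X]) (m : R) (n : ℕ) :
    (C m * p - X * derivative p).coeff n = (m - n) * p.coeff n := by
  cases n with
  | zero => simp
  | succ n =>
    simp only [coeff_sub, coeff_C_mul, coeff_X_mul, coeff_derivative]
    push_cast
    ring

theorem natDegree_C_mul_sub_X_mul_derivative {R : Type*} [CommRing R] {p : R[X]} {m : R}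
    (h : (m - p.natDegree) * p.leadingCoeff ≠ 0) :
    (C m * p - X * derivative p).natDegree = p.natDegree := by
  refine natDegree_eq_of_le_of_coeff_ne_zero ?_ (by rwa [coeff_C_mul_sub_X_mul_derivative])
  rw [natDegree_le_iff_coeff_eq_zero]
  intro j hj
  rw [coeff_C_mul_sub_X_mul_derivative, coeff_eq_zero_of_natDegree_lt hj, mul_zero]

theorem leadingCoeff_C_mul_sub_X_mul_derivative {R : Type*} [CommRing R] {p : R[X]} {m : R}
    (h : (m - p.natDegree) * p.leadingCoeff ≠ 0) :
    (C m * p - X * derivative p).leadingCoeff = (m - p.natDegree) * p.leadingCoeff := by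
  rw [leadingCoeff, natDegree_C_mul_sub_X_mul_derivative h, coeff_C_mul_sub_X_mul_derivative,
    leadingCoeff]

theorem bddAbove_range_eval_of_even_natDegree_of_leadingCoeff_neg {P : ℝ[X]}
    (he : Even P.natDegree) (hl : P.leadingCoeff < 0) : BddAbove (Set.range fun x => P.eval x) := by
  rcases Nat.eq_zero_or_pos P.natDegree with h0 | hpos
  · rw [eq_C_of_natDegree_eq_zero h0]
    simp
  have hdeg : 0 < P.degree := natDegree_pos_iff_degree_pos.mp hpos
  have hatBot : Tendsto (fun x => P.eval x) atBot atBot := by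
    have hneg : (P.comp (-X)).leadingCoeff ≤ 0 := by simpa [he.neg_one_pow] using hl.le
    simpa [Function.comp_def] using
      ((P.comp (-X)).tendsto_atBot_of_leadingCoeff_nonpos (by simpa using hdeg) hneg).comp
        tendsto_neg_atBot_atTop
  have hcocompact : Tendsto (fun x => P.eval x) (cocompact ℝ) atBot := by
    rw [cocompact_eq_atBot_atTop, tendsto_sup]
    exact ⟨hatBot, P.tendsto_atBot_of_leadingCoeff_nonpos hdeg hl.le⟩
  obtain ⟨x₀, hx₀⟩ := P.continuous.exists_forall_ge hcocompact
  exact ⟨P.eval x₀, Set.forall_mem_range.mpr hx₀⟩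

theorem exists_forall_tamed_derivative_combination_le {F : ℝ[X]} {q : ℕ}
    (hodd : Odd F.natDegree) (hq : F.natDegree < 2 * q) (hl : F.leadingCoeff < 0) :
    ∃ K, ∀ τ : ℝ, 0 ≤ τ → τ ≤ 1 → ∀ ξ : ℝ,
      (1 - τ * ξ ^ (2 * q)) * F.derivative.eval ξ
        + 2 * q * τ * ξ ^ (2 * q - 1) * F.eval ξ ≤ K := by
  obtain ⟨j, hj⟩ := hodd
  set H : ℝ[X] := C (2 * q : ℝ) * F - X * derivative F
  have hH : ((2 * q : ℝ) - F.natDegree) * F.leadingCoeff < 0 :=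
    mul_neg_of_pos_of_neg (by rw [sub_pos]; exact_mod_cast hq) hl
  have hHdeg : H.natDegree = F.natDegree := natDegree_C_mul_sub_X_mul_derivative hH.ne
  have hH0 : H ≠ 0 := ne_zero_of_natDegree_gt (n := 0) (by omega)
  obtain ⟨M₁, hM₁⟩ :=
    bddAbove_range_eval_of_even_natDegree_of_leadingCoeff_neg (P := derivative F)
      (by rw [natDegree_derivative]; exact ⟨j, by omega⟩)
      (by simpa using mul_neg_of_neg_of_pos hl (by norm_cast; omega))
  obtain ⟨M₂, hM₂⟩ :=
    bddAbove_range_eval_of_even_natDegree_of_leadingCoeff_neg (P := X ^ (2 * q - 1) * H)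
      (by rw [natDegree_X_pow_mul _ hH0, hHdeg]; exact ⟨j + q, by omega⟩)
      (by rwa [leadingCoeff_mul, leadingCoeff_X_pow, one_mul,
        leadingCoeff_C_mul_sub_X_mul_derivative hH.ne])
  refine ⟨M₁ + max M₂ 0, fun τ hτ hτ1 ξ => ?_⟩
  have hsplit : (1 - τ * ξ ^ (2 * q)) * F.derivative.eval ξ
      + 2 * q * τ * ξ ^ (2 * q - 1) * F.eval ξ
      = F.derivative.eval ξ + τ * (X ^ (2 * q - 1) * H).eval ξ := by
    have hpow : ξ ^ (2 * q) = ξ ^ (2 * q - 1) * ξ := by rw [← pow_succ]; congr 1; omega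
    simp only [H, eval_mul, eval_sub, eval_pow, eval_X, eval_C, hpow]
    ring
  rw [hsplit]
  have h₂ : τ * (X ^ (2 * q - 1) * H).eval ξ ≤ max M₂ 0 :=
    calc τ * (X ^ (2 * q - 1) * H).eval ξ ≤ τ * max M₂ 0 :=
          mul_le_mul_of_nonneg_left ((hM₂ ⟨ξ, rfl⟩).trans (le_max_left _ _)) hτ
      _ ≤ max M₂ 0 := mul_le_of_le_one_left (le_max_right _ _) hτ1
  linarith [hM₁ ⟨ξ, rfl⟩]

end Polynomial

theorem odd_polynomial_tamed_derivative_condition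
    (k : ℕ) (hk : 1 ≤ k) (a : ℕ → ℝ) (hlead : a (2 * k + 1) < 0)
    (f : ℝ → ℝ) (hf : f = fun ξ : ℝ => ∑ i ∈ Finset.range (2 * k + 2), a i * ξ ^ i) :
    ∃ K3 : ℝ, 0 < K3 ∧
      ∀ τ : ℝ, 0 < τ → τ ≤ 1 → ∀ ξ : ℝ,
        (1 - τ * ξ ^ (4 * k)) * deriv f ξ +
            2 * (2 * k : ℝ) * τ * ξ ^ (4 * k - 1) * f ξ ≤
          K3 * (1 + τ * ξ ^ (4 * k)) ^ ((3 : ℝ) / 2) := by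
  set F : ℝ[X] := ∑ i ∈ range (2 * k + 1 + 1), C (a i) * X ^ i
  have hFeval : f = fun ξ => F.eval ξ := by simp [hf, F, eval_finsetSum]
  have hFdeg : F.natDegree = 2 * k + 1 := natDegree_sum_range_C_mul_X_pow hlead.ne
  obtain ⟨K, hK⟩ := exists_forall_tamed_derivative_combination_le (q := 2 * k)
    (hFdeg ▸ odd_two_mul_add_one k) (by omega)
    (by rw [leadingCoeff, hFdeg]; simpa [F] using hlead)
  refine ⟨max K 1, by positivity, fun τ hτ hτ1 ξ => ?_⟩
  have hξ : 0 ≤ ξ ^ (4 * k) := by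
    rw [show 4 * k = 2 * (2 * k) by ring]; exact (even_two_mul _).pow_nonneg ξ
  have hgrowth : 1 ≤ (1 + τ * ξ ^ (4 * k)) ^ ((3 : ℝ) / 2) :=
    Real.one_le_rpow (le_add_of_nonneg_right (mul_nonneg hτ.le hξ)) (by norm_num)
  have hLHS := hK τ hτ.le hτ1 ξ
  rw [show 2 * (2 * k) = 4 * k by ring] at hLHS
  push_cast at hLHS
  rw [hFeval, Polynomial.deriv]
  calc _ ≤ K := hLHS
    _ ≤ max K 1 := le_max_left _ _
    _ ≤ max K 1 * (1 + τ * ξ ^ (4 * k)) ^ ((3 : ℝ) / 2) :=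
        le_mul_of_one_le_right (by positivity) hgrowth
end
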